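/- arXiv:math/0602043 — 4 statements merged into one kernel-verified Lean document; each statement's English description precedes it below -/
import Mathlib

section
/- Let A be a set, θ ⊆ A × A a binary relation, and θ̄ its complement. For n ≥ 1, in the free associative algebra ℤ⟨A⟩: Σ_{k=0}^{n} (-1)^k Λ_k(A,θ) Λ_{n-k}(A,θ̄) = 0, where Λ_m(A,θ) is the sum of all words a₁a₂···a_m of length m with a_i θ a_{i+1} for all 1 ≤ i < m (and Λ_0 = 1, Λ_1 = Σ_{a∈A} a). -/
/-- `w : Fin m → A` is a `θ`-chain if consecutive letters are `θ`-related. -/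
def IsChain' {A : Type*} (θ : A → A → Prop) {m : ℕ} (w : Fin m → A) : Prop :=
  ∀ i : Fin m, ∀ h : (i : ℕ) + 1 < m, θ (w i) (w ⟨(i : ℕ) + 1, h⟩)

instance {A : Type*} (θ : A → A → Prop) [DecidableRel θ] {m : ℕ} (w : Fin m → A) :
    Decidable (IsChain' θ w) := by
  unfold IsChain'; infer_instance

/-- The `θ`-elementary function `Λ_m(A,θ) ∈ ℤ⟨A⟩`: the sum of all `θ`-chains
of length `m`, viewed as products of generators of the free algebra. -/
noncomputable def LamTheta {A : Type*} [Fintype A] (θ : A → A → Prop)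
    [DecidableRel θ] (m : ℕ) : FreeAlgebra ℤ A :=
  ∑ w ∈ Finset.univ.filter (fun w : Fin m → A => IsChain' θ w),
    ((List.ofFn w).map (FreeAlgebra.ι ℤ)).prod

open Finset List

set_option linter.unusedSectionVars false

namespace Stmt7Aux

variable {A : Type*} [Fintype A] [DecidableEq A] (θ : A → A → Prop) [DecidableRel θ]

noncomputable def wd (l : List A) : FreeAlgebra ℤ A := (l.map (FreeAlgebra.ι ℤ)).prod

lemma wd_append (l₁ l₂ : List A) : wd (l₁ ++ l₂) = wd l₁ * wd l₂ := by
  simp [wd]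

/-- All words of length `m`. -/
def Lw (m : ℕ) : Finset (List A) := (Finset.univ : Finset (Fin m → A)).image List.ofFn

lemma mem_Lw {m : ℕ} {l : List A} : l ∈ (Lw m : Finset (List A)) ↔ l.length = m := by
  constructor
  · intro h
    simp only [Lw, mem_image] at h
    obtain ⟨w, _, rfl⟩ := h
    simp
  · intro h
    simp only [Lw, mem_image]
    refine ⟨fun i => l[(i : ℕ)]'(h ▸ i.isLt), mem_univ _, ?_⟩
    apply List.ext_getElem (by simp [h])
    intro i h1 h2
    simp

lemma lam_eq (m : ℕ) :
    LamTheta θ m = ∑ l ∈ (Lw m).filter (fun l => l.IsChain θ), wd l := by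
  unfold LamTheta Lw
  rw [Finset.filter_image, Finset.sum_image]
  · apply Finset.sum_congr
    · apply Finset.filter_congr
      intro w _
      rw [List.isChain_ofFn]
      constructor
      · intro h i hi; exact h ⟨i, by omega⟩ hi
      · intro h i hi; exact h i hi
    · intro l _; rfl
  · intro a _ b _ h
    exact List.ofFn_injective h

end Stmt7Aux

namespace Stmt7Aux
variable {A : Type*} [Fintype A] [DecidableEq A] (θ : A → A → Prop) [DecidableRel θ]

/-- The split-point predicate: first `k` letters form a `θ`-chain (pairs `i, i+1` with
`i+2 ≤ k`), the rest is a `θ̄`-chain (pairs with `k ≤ i`). -/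
def D (k : ℕ) (l : List A) : Prop :=
  ∀ i, ∀ h : i + 1 < l.length,
    (i + 2 ≤ k → θ (l[i]'(by omega)) (l[i+1]'h)) ∧ (k ≤ i → ¬ θ (l[i]'(by omega)) (l[i+1]'h))

instance (k : ℕ) (l : List A) : Decidable (D θ k l) := by
  refine decidable_of_iff
    (∀ i, ∀ _ : i < l.length - 1,
      ((i + 2 ≤ k → θ (l[i]'(by omega)) (l[i+1]'(by omega))) ∧
        (k ≤ i → ¬ θ (l[i]'(by omega)) (l[i+1]'(by omega))))) ⟨fun h i hi => h i (by omega), fun h i hi => h i (by omega)⟩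

lemma D_take_drop {k : ℕ} {l : List A} (hk : k ≤ l.length) :
    (IsChain θ (l.take k) ∧ IsChain (fun a b => ¬ θ a b) (l.drop k)) ↔ D θ k l := by
  rw [List.isChain_iff_getElem, List.isChain_iff_getElem]
  simp only [List.get_eq_getElem, List.getElem_take, List.getElem_drop,
    List.length_take, List.length_drop]
  constructor
  · rintro ⟨h1, h2⟩ i hi
    constructor
    · intro hik
      exact h1 i (by omega)
    · intro hki
      obtain ⟨j, rfl⟩ : ∃ j, i = k + j := ⟨i - k, by omega⟩
      exact h2 j (by omega)
  · intro h
    constructor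
    · intro i hi
      exact (h i (by omega)).1 (by omega)
    · intro j hj
      exact (h (k + j) (by omega)).2 (by omega)

variable {θ}

lemma D_one {l : List A} (hl : 1 ≤ l.length) (h : D θ 0 l) : D θ 1 l := by
  intro i hi
  exact ⟨fun h2 => absurd h2 (by omega), fun _ => (h i hi).2 (by omega)⟩

lemma not_D_two {l : List A} {k : ℕ} (hk1 : k + 1 < l.length) (hk : D θ k l) :
    ¬ D θ (k + 2) l :=
  fun h2 => (hk k hk1).2 le_rfl ((h2 k hk1).1 (by omega))

lemma D_pred {l : List A} {j : ℕ} (hkl : j + 1 ≤ l.length) (hD : D θ (j+1) l)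
    (hnot : ¬ (j + 1 < l.length ∧ D θ (j+2) l)) : D θ j l := by
  rcases Nat.lt_or_ge (j+1) l.length with hlt | hge
  · -- the pair (j, j+1) must fail θ
    have hnd : ¬ D θ (j+2) l := fun h => hnot ⟨hlt, h⟩
    have hpair : ¬ θ (l[j]'(by omega)) (l[j+1]'hlt) := by
      intro hθ
      apply hnd
      intro i hi
      refine ⟨?_, fun hki => (hD i hi).2 (by omega)⟩
      intro hik
      rcases Nat.lt_or_ge (i + 2) (j + 2) with h' | h'
      · exact (hD i hi).1 (by omega)
      · have : i = j := by omega
        subst this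
        exact hθ
    intro i hi
    refine ⟨fun hik => (hD i hi).1 (by omega), ?_⟩
    intro hki
    rcases Nat.lt_or_ge i (j+1) with h' | h'
    · have : i = j := by omega
      subst this
      exact hpair
    · exact (hD i hi).2 (by omega)
  · -- k = length, so the pair (j, j+1) does not exist; second condition vacuous
    intro i hi
    exact ⟨fun hik => (hD i hi).1 (by omega), fun hki => by omega⟩

end Stmt7Aux

namespace Stmt7Aux
variable {A : Type*} [Fintype A] [DecidableEq A] (θ : A → A → Prop) [DecidableRel θ]

lemma prod_eq {n : ℕ} (k : ℕ) (hk : k ≤ n) :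
    LamTheta θ k * LamTheta (fun a b => ¬ θ a b) (n - k)
      = ∑ l ∈ (Lw n).filter (fun l => D θ k l), wd l := by
  rw [lam_eq, lam_eq, Finset.sum_mul_sum, ← Finset.sum_product']
  apply Finset.sum_nbij' (i := fun p : List A × List A => p.1 ++ p.2)
    (j := fun l : List A => (l.take k, l.drop k))
  · rintro ⟨l₁, l₂⟩ hp
    simp only [Finset.mem_product, Finset.mem_filter, mem_Lw] at hp
    obtain ⟨⟨h1, c1⟩, h2, c2⟩ := hp
    have hlen : (l₁ ++ l₂).length = n := by simp [h1, h2]; omega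
    simp only [Finset.mem_filter, mem_Lw]
    refine ⟨hlen, ?_⟩
    rw [← D_take_drop θ (by omega)]
    rw [List.take_left' h1, List.drop_left' h1]
    exact ⟨c1, c2⟩
  · intro l hl
    simp only [Finset.mem_filter, mem_Lw] at hl
    obtain ⟨hlen, hD⟩ := hl
    have := (D_take_drop θ (by omega)).mpr hD
    simp only [Finset.mem_product, Finset.mem_filter, mem_Lw]
    exact ⟨⟨by simp [hlen]; omega, this.1⟩, ⟨by simp [hlen], this.2⟩⟩
  · rintro ⟨l₁, l₂⟩ hp
    simp only [Finset.mem_product, Finset.mem_filter, mem_Lw] at hp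
    simp [List.take_left' hp.1.1, List.drop_left' hp.1.1]
  · intro l _
    simp
  · rintro ⟨l₁, l₂⟩ _
    exact (wd_append _ _).symm

/-- The involution on split points. -/
def other (k : ℕ) (l : List A) : ℕ := if k < l.length ∧ D θ (k+1) l then k + 1 else k - 1

variable {θ}

lemma other_spec {l : List A} {k : ℕ} (hn : 1 ≤ l.length) (hk : k ≤ l.length) (hD : D θ k l) :
    (other θ (other θ k l) l = k ∧ other θ k l ≤ l.length ∧ D θ (other θ k l) l)
      ∧ (other θ k l = k + 1 ∨ (1 ≤ k ∧ other θ k l = k - 1)) := by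
  by_cases hc : k < l.length ∧ D θ (k+1) l
  · have h1 : other θ k l = k + 1 := by rw [other, if_pos hc]
    have h2 : other θ (k+1) l = k := by
      rw [other, if_neg (fun hb => not_D_two hb.1 hD hb.2)]
      omega
    rw [h1, h2]
    exact ⟨⟨rfl, hc.1, hc.2⟩, Or.inl rfl⟩
  · have hk1 : 1 ≤ k := by
      by_contra h
      have : k = 0 := by omega
      subst this
      exact hc ⟨by omega, D_one hn hD⟩
    obtain ⟨j, rfl⟩ : ∃ j, k = j + 1 := ⟨k - 1, by omega⟩
    have hDj : D θ j l := D_pred hk hD hc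
    have h1 : other θ (j+1) l = j := by rw [other, if_neg hc]; omega
    have h2 : other θ j l = j + 1 := by
      rw [other, if_pos ⟨by omega, hD⟩]
    rw [h1, h2]
    exact ⟨⟨rfl, by omega, hDj⟩, Or.inr ⟨by omega, rfl⟩⟩

end Stmt7Aux

open Stmt7Aux

/-- Carlitz–Koszul duality: for any relation `θ` on a finite set `A` and `n ≥ 1`,
`Σ_{k=0}^{n} (-1)^k Λ_k(A,θ) Λ_{n-k}(A,θ̄) = 0` in the free algebra `ℤ⟨A⟩`,
where `θ̄` is the complementary relation. -/
theorem stmt7 {A : Type*} [Fintype A] [DecidableEq A]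
    (θ : A → A → Prop) [DecidableRel θ] (n : ℕ) (hn : 1 ≤ n) :
    ∑ k ∈ Finset.range (n + 1),
      ((-1 : ℤ) ^ k) • (LamTheta θ k * LamTheta (fun a b => ¬ θ a b) (n - k))
    = 0 := by
  have step1 : ∑ k ∈ Finset.range (n + 1),
      ((-1 : ℤ) ^ k) • (LamTheta θ k * LamTheta (fun a b => ¬ θ a b) (n - k))
      = ∑ p ∈ ((Finset.range (n+1)) ×ˢ (Lw n)).filter (fun p : ℕ × List A => D θ p.1 p.2),
          ((-1 : ℤ) ^ p.1) • wd p.2 := by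
    rw [Finset.sum_filter, Finset.sum_product]
    apply Finset.sum_congr rfl
    intro k hk
    rw [Finset.mem_range] at hk
    rw [prod_eq θ k (by omega), Finset.smul_sum, Finset.sum_filter]
  rw [step1]
  apply Finset.sum_involution (fun p _ => (other θ p.1 p.2, p.2))
  · rintro ⟨k, l⟩ hp
    dsimp only
    simp only [Finset.mem_filter, Finset.mem_product, Finset.mem_range, mem_Lw] at hp
    obtain ⟨⟨hk, hlen⟩, hD⟩ := hp
    obtain ⟨_, hor⟩ := other_spec (l := l) (by omega) (by omega) hD
    rcases hor with h | ⟨h1, h⟩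
    · rw [h, ← add_smul,
        show ((-1:ℤ)^k + (-1:ℤ)^(k+1)) = 0 by rw [pow_succ]; ring, zero_smul]
    · obtain ⟨j, rfl⟩ : ∃ j, k = j + 1 := ⟨k - 1, by omega⟩
      rw [h, Nat.add_sub_cancel, ← add_smul,
        show ((-1:ℤ)^(j+1) + (-1:ℤ)^j) = 0 by rw [pow_succ]; ring, zero_smul]
  · rintro ⟨k, l⟩ hp _
    dsimp only
    simp only [Finset.mem_filter, Finset.mem_product, Finset.mem_range, mem_Lw] at hp
    obtain ⟨⟨hk, hlen⟩, hD⟩ := hp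
    obtain ⟨_, hor⟩ := other_spec (l := l) (by omega) (by omega) hD
    intro h
    rw [Prod.mk.injEq] at h
    omega
  · rintro ⟨k, l⟩ hp
    dsimp only
    simp only [Finset.mem_filter, Finset.mem_product, Finset.mem_range, mem_Lw] at hp ⊢
    obtain ⟨⟨hk, hlen⟩, hD⟩ := hp
    obtain ⟨⟨_, h1, h2⟩, _⟩ := other_spec (l := l) (by omega) (by omega) hD
    exact ⟨⟨by omega, hlen⟩, h2⟩
  · rintro ⟨k, l⟩ hp
    dsimp only
    simp only [Finset.mem_filter, Finset.mem_product, Finset.mem_range, mem_Lw] at hp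
    obtain ⟨⟨hk, hlen⟩, hD⟩ := hp
    obtain ⟨⟨h0, _, _⟩, _⟩ := other_spec (l := l) (by omega) (by omega) hD
    simp [h0]
end

section
/- In Sym ⊗ Sym with the embedding j defined by Λ_n ↦ Λ_n ⊗ S_n, the image of the ribbon function R_K of degree n is R_K(𝕁) = Σ_{I\J = K} R_I ⊗ R_J, where the sum is over pairs of compositions (I,J) of n with Des(I) \ Des(J) = Des(K). In particular the degree-n components satisfy the multiplication rule making j an algebra morphism. -/
open TensorProduct
open Fin.NatCast

/-- Noncommutative symmetric functions: free algebra on the complete functions. -/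
abbrev NCSym : Type := FreeAlgebra ℚ ℕ

/-- The complete noncommutative symmetric function `Sₙ`. -/
def Scomp (n : ℕ) : NCSym := FreeAlgebra.ι ℚ n

/-- `S^J = S_{j₁} ⋯ S_{j_r}` for a composition `J`. -/
def Sprod {n : ℕ} (c : Composition n) : NCSym := (c.blocks.map Scomp).prod

/-- The descent set of a composition of `n`. -/
def Composition.des {n : ℕ} (c : Composition n) : Finset ℕ :=
  (Finset.range (c.length - 1)).image (fun i => c.sizeUpTo (i + 1))

/-- The ribbon basis `R_I = Σ_{Des J ⊆ Des I} (-1)^{l(I)-l(J)} S^J`. -/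
def Rib {n : ℕ} (c : Composition n) : NCSym :=
  ∑ d ∈ Finset.univ.filter (fun d : Composition n => d.des ⊆ c.des),
    ((-1 : ℚ) ^ (c.length + d.length)) • Sprod d

/-- The elementary function `Λₙ = R_{(1ⁿ)}`. -/
def Lam (n : ℕ) : NCSym := Rib (Composition.ones n)

namespace Composition

variable {n : ℕ}

theorem sizeUpTo_pos {c : Composition n} {i : ℕ} (hi : 0 < i) (hl : 0 < c.length) :
    0 < c.sizeUpTo i := by
  have h0 : c.sizeUpTo 0 < c.sizeUpTo 1 := c.sizeUpTo_strict_mono hl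
  have := c.monotone_sizeUpTo (show 1 ≤ i from hi)
  simpa [c.sizeUpTo_zero] using lt_of_lt_of_le h0 this

theorem sizeUpTo_lt_n {c : Composition n} {i : ℕ} (hi : i < c.length) :
    c.sizeUpTo i < n := by
  have h0 : c.sizeUpTo i < c.sizeUpTo (i+1) := c.sizeUpTo_strict_mono hi
  have h1 : c.sizeUpTo (i+1) ≤ c.sizeUpTo c.length := c.monotone_sizeUpTo hi
  rw [c.sizeUpTo_length] at h1
  omega

theorem mem_des_iff {c : Composition n} {x : ℕ} :
    x ∈ c.des ↔ 0 < x ∧ x < n ∧ ∃ i, (c.blocks.take i).sum = x := by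
  constructor
  · intro hx
    simp only [des, Finset.mem_image, Finset.mem_range] at hx
    obtain ⟨i, hi, rfl⟩ := hx
    have h1 : i + 1 < c.length := by omega
    exact ⟨sizeUpTo_pos (Nat.succ_pos i) (by omega), sizeUpTo_lt_n h1, i+1, rfl⟩
  · rintro ⟨h0, hn, i, hi⟩
    have hi1 : 1 ≤ i := by
      rcases Nat.eq_zero_or_pos i with rfl | h
      · simp [List.take_zero] at hi; omega
      · exact h
    have hil : i < c.length := by
      by_contra h
      push_neg at h
      rw [show (c.blocks.take i).sum = c.sizeUpTo i from rfl, c.sizeUpTo_ofLength_le i h] at hi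
      omega
    simp only [des, Finset.mem_image, Finset.mem_range]
    exact ⟨i - 1, by omega, by show c.sizeUpTo (i-1+1) = x; rw [show i - 1 + 1 = i by omega]; exact hi⟩

theorem des_subset_Ioo (c : Composition n) : c.des ⊆ Finset.Ioo 0 n := by
  intro x hx
  rw [mem_des_iff] at hx
  simp only [Finset.mem_Ioo]
  exact ⟨hx.1, hx.2.1⟩

theorem des_ones : (Composition.ones n).des = Finset.Ioo 0 n := by
  ext x
  simp only [mem_des_iff, Finset.mem_Ioo]
  constructor
  · rintro ⟨h1, h2, -⟩; exact ⟨h1, h2⟩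
  · rintro ⟨h1, h2⟩
    refine ⟨h1, h2, x, ?_⟩
    have := Composition.ones_sizeUpTo n x
    rw [show ((ones n).blocks.take x).sum = (ones n).sizeUpTo x from rfl, this]
    omega

theorem coe_boundary {c : Composition n} (i : Fin (c.length + 1)) :
    ((c.boundary.toEmbedding i : Fin (n+1)) : ℕ) = c.sizeUpTo i := rfl

theorem coe_boundary' {c : Composition n} (i : Fin (c.length + 1)) :
    ((c.boundary i : Fin (n+1)) : ℕ) = c.sizeUpTo i := rfl

theorem boundaries_eq_des (c : Composition n) :
    c.boundaries = insert 0 (insert (Fin.last n)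
      (c.des.image (fun x : ℕ => (x : Fin (n+1))))) := by
  ext j
  simp only [Composition.boundaries, Finset.mem_map, Finset.mem_univ, true_and,
    Finset.mem_insert, Finset.mem_image]
  constructor
  · rintro ⟨i, rfl⟩
    rcases Nat.eq_zero_or_pos (c.sizeUpTo i) with h0 | h0
    · left
      apply Fin.ext
      rw [coe_boundary]
      simpa using h0
    rcases Nat.lt_or_ge (i : ℕ) c.length with hl | hl
    · right; right
      refine ⟨c.sizeUpTo i, ?_, ?_⟩
      · rw [mem_des_iff]
        exact ⟨h0, sizeUpTo_lt_n hl, i, rfl⟩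
      · apply Fin.ext
        rw [Fin.val_cast_of_lt (by have := sizeUpTo_lt_n hl; omega)]
        exact (coe_boundary i).symm
    · right; left
      apply Fin.ext
      rw [coe_boundary, c.sizeUpTo_ofLength_le _ hl]
      simp [Fin.last]
  · rintro (rfl | rfl | ⟨x, hx, rfl⟩)
    · refine ⟨0, ?_⟩
      apply Fin.ext
      rw [coe_boundary]
      simp [c.sizeUpTo_zero]
    · refine ⟨Fin.last c.length, ?_⟩
      apply Fin.ext
      rw [coe_boundary]
      show c.sizeUpTo c.length = (Fin.last n : ℕ)
      simp [Fin.last, c.sizeUpTo_length]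
    · rw [mem_des_iff] at hx
      obtain ⟨h0, hn, i, hi⟩ := hx
      have hil : i < c.length := by
        by_contra h
        push_neg at h
        rw [show (c.blocks.take i).sum = c.sizeUpTo i from rfl, c.sizeUpTo_ofLength_le i h] at hi
        omega
      refine ⟨⟨i, by omega⟩, ?_⟩
      apply Fin.ext
      rw [coe_boundary, Fin.val_cast_of_lt (by omega)]
      exact hi

/-- The `CompositionAsSet` with boundaries `{0, n} ∪ S`. -/
def casMk (n : ℕ) (S : Finset ℕ) : CompositionAsSet n :=
  ⟨insert 0 (insert (Fin.last n) (S.image (fun x : ℕ => (x : Fin (n+1))))),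
   Finset.mem_insert_self _ _, Finset.mem_insert_of_mem (Finset.mem_insert_self _ _)⟩

/-- The composition of `n` with prescribed descent set `S`. -/
def mkComp (n : ℕ) (S : Finset ℕ) : Composition n := (casMk n S).toComposition

theorem mkComp_des (c : Composition n) : mkComp n c.des = c := by
  have h : casMk n c.des = c.toCompositionAsSet := by
    ext1
    rw [Composition.toCompositionAsSet_boundaries, boundaries_eq_des]
    rfl
  rw [mkComp, h]
  exact (compositionEquiv n).left_inv c

theorem des_mkComp {S : Finset ℕ} (hS : S ⊆ Finset.Ioo 0 n) : (mkComp n S).des = S := by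
  have h1 : (mkComp n S).boundaries = (casMk n S).boundaries :=
    CompositionAsSet.toComposition_boundaries _
  rw [boundaries_eq_des] at h1
  have key : ∀ x : ℕ, 0 < x → x < n →
      (((x : Fin (n+1)) = 0 ∨ (x : Fin (n+1)) = Fin.last n ∨
        (x : Fin (n+1)) ∈ (mkComp n S).des.image (fun y : ℕ => (y : Fin (n+1)))) ↔
       ((x : Fin (n+1)) = 0 ∨ (x : Fin (n+1)) = Fin.last n ∨
        (x : Fin (n+1)) ∈ S.image (fun y : ℕ => (y : Fin (n+1))))) := by
    intro x _ _
    have := Finset.ext_iff.mp h1 (x : Fin (n+1))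
    simpa [Finset.mem_insert, casMk] using this
  ext x
  constructor
  · intro hx
    have hx' := (mkComp n S).des_subset_Ioo hx
    simp only [Finset.mem_Ioo] at hx'
    have hne0 : ((x : Fin (n+1)) : ℕ) = x := Fin.val_cast_of_lt (by omega)
    have := (key x hx'.1 hx'.2).mp (Or.inr (Or.inr (Finset.mem_image_of_mem _ hx)))
    rcases this with h | h | h
    · exfalso; have h2 : x = 0 := by have := congrArg Fin.val h; rw [hne0] at this; simpa using this
      omega
    · exfalso; have := congrArg Fin.val h; rw [hne0] at this; simp [Fin.last] at this; omega
    · simp only [Finset.mem_image] at h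
      obtain ⟨y, hy, hxy⟩ := h
      have hy' := hS hy
      simp only [Finset.mem_Ioo] at hy'
      have : ((y : Fin (n+1)) : ℕ) = y := Fin.val_cast_of_lt (by omega)
      have := congrArg Fin.val hxy
      rw [‹((y : Fin (n+1)) : ℕ) = y›, hne0] at this
      exact this ▸ hy
  · intro hx
    have hx' := hS hx
    simp only [Finset.mem_Ioo] at hx'
    have hne0 : ((x : Fin (n+1)) : ℕ) = x := Fin.val_cast_of_lt (by omega)
    have := (key x hx'.1 hx'.2).mpr (Or.inr (Or.inr (Finset.mem_image_of_mem _ hx)))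
    rcases this with h | h | h
    · exfalso; have h2 : x = 0 := by have := congrArg Fin.val h; rw [hne0] at this; simpa using this
      omega
    · exfalso; have := congrArg Fin.val h; rw [hne0] at this; simp [Fin.last] at this; omega
    · simp only [Finset.mem_image] at h
      obtain ⟨y, hy, hxy⟩ := h
      have hy' := (mkComp n S).des_subset_Ioo hy
      simp only [Finset.mem_Ioo] at hy'
      have : ((y : Fin (n+1)) : ℕ) = y := Fin.val_cast_of_lt (by omega)
      have := congrArg Fin.val hxy
      rw [‹((y : Fin (n+1)) : ℕ) = y›, hne0] at this
      exact this ▸ hy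

theorem length_eq_card_des (hn : 1 ≤ n) (c : Composition n) :
    c.length = c.des.card + 1 := by
  have h := c.card_boundaries_eq_succ_length
  rw [boundaries_eq_des] at h
  have hinj : Set.InjOn (fun x : ℕ => (x : Fin (n+1))) c.des := by
    intro a ha b hb hab
    have ha' := c.des_subset_Ioo ha
    have hb' := c.des_subset_Ioo hb
    simp only [Finset.mem_Ioo] at ha' hb'
    have := congrArg Fin.val hab
    rwa [Fin.val_cast_of_lt (by omega), Fin.val_cast_of_lt (by omega)] at this
  have hcard : (c.des.image (fun x : ℕ => (x : Fin (n+1)))).card = c.des.card :=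
    Finset.card_image_of_injOn hinj
  have h0 : (0 : Fin (n+1)) ∉ insert (Fin.last n) (c.des.image (fun x : ℕ => (x : Fin (n+1)))) := by
    simp only [Finset.mem_insert, Finset.mem_image]
    push_neg
    constructor
    · intro h'
      have := congrArg Fin.val h'
      simp [Fin.last] at this
      omega
    · intro x hx h'
      have hx' := c.des_subset_Ioo hx
      simp only [Finset.mem_Ioo] at hx'
      have := congrArg Fin.val h'
      rw [Fin.val_cast_of_lt (by omega)] at this
      simp at this
      omega
  have hlast : (Fin.last n) ∉ c.des.image (fun x : ℕ => (x : Fin (n+1))) := by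
    simp only [Finset.mem_image]
    push_neg
    intro x hx h'
    have hx' := c.des_subset_Ioo hx
    simp only [Finset.mem_Ioo] at hx'
    have := congrArg Fin.val h'
    rw [Fin.val_cast_of_lt (by omega)] at this
    simp [Fin.last] at this
    omega
  rw [Finset.card_insert_of_notMem h0, Finset.card_insert_of_notMem hlast, hcard] at h
  omega

end Composition

open Composition

theorem sum_Icc_neg_one_pow {α : Type*} [DecidableEq α] (A B : Finset α) :
    ∑ V ∈ Finset.Icc A B, (-1:ℚ)^V.card = if A = B then (-1:ℚ)^A.card else 0 := by
  by_cases hAB : A ⊆ B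
  · rw [show (∑ V ∈ Finset.Icc A B, (-1:ℚ)^V.card)
        = ∑ W ∈ (B \ A).powerset, (-1:ℚ)^(W.card + A.card) from ?_]
    · have hz : ∑ W ∈ (B \ A).powerset, (-1:ℚ)^W.card = if B \ A = ∅ then 1 else 0 := by
        have := Finset.sum_powerset_neg_one_pow_card (x := B \ A)
        calc ∑ W ∈ (B \ A).powerset, (-1:ℚ)^W.card
            = ((∑ W ∈ (B \ A).powerset, (-1:ℤ)^W.card : ℤ) : ℚ) := by push_cast; ring_nf
          _ = _ := by rw [this]; split <;> norm_num
      have : ∑ W ∈ (B \ A).powerset, (-1:ℚ)^(W.card + A.card)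
          = (∑ W ∈ (B \ A).powerset, (-1:ℚ)^W.card) * (-1:ℚ)^A.card := by
        rw [Finset.sum_mul]
        exact Finset.sum_congr rfl (fun W _ => by rw [pow_add])
      rw [this, hz]
      by_cases h : A = B
      · rw [if_pos h, if_pos (by rw [h]; simp), one_mul]
      · have hne : ¬ (B \ A = ∅) := by
          intro he
          apply h
          apply Finset.Subset.antisymm hAB
          intro x hx
          by_contra hxA
          exact Finset.eq_empty_iff_forall_notMem.mp he x (Finset.mem_sdiff.mpr ⟨hx, hxA⟩)
        rw [if_neg h, if_neg hne, zero_mul]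
    · refine Finset.sum_nbij' (fun V => V \ A) (fun W => A ∪ W) ?_ ?_ ?_ ?_ ?_
      · intro V hV
        rw [Finset.mem_Icc] at hV
        rw [Finset.mem_powerset]
        exact Finset.sdiff_subset_sdiff hV.2 (le_refl A)
      · intro W hW
        rw [Finset.mem_powerset] at hW
        rw [Finset.mem_Icc]
        exact ⟨Finset.subset_union_left, Finset.union_subset hAB
          (hW.trans (Finset.sdiff_subset))⟩
      · intro V hV
        rw [Finset.mem_Icc] at hV
        exact Finset.union_sdiff_of_subset hV.1
      · intro W hW
        rw [Finset.mem_powerset] at hW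
        refine Finset.union_sdiff_cancel_left ?_
        exact Finset.disjoint_right.mpr (fun a haW => (Finset.mem_sdiff.mp (hW haW)).2)
      · intro V hV
        rw [Finset.mem_Icc] at hV
        rw [← Finset.card_sdiff_add_card_eq_card hV.1]
  · rw [Finset.Icc_eq_empty hAB, Finset.sum_empty, if_neg (fun h => hAB (le_of_eq h))]

theorem sum_des_interval {n : ℕ} (hn : 1 ≤ n) (A B : Finset ℕ) (hB : B ⊆ Finset.Ioo 0 n) :
    ∑ M ∈ Finset.univ.filter (fun M : Composition n => A ⊆ M.des ∧ M.des ⊆ B),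
      (-1:ℚ) ^ M.length = if A = B then (-1:ℚ)^(A.card+1) else 0 := by
  rw [show (∑ M ∈ Finset.univ.filter (fun M : Composition n => A ⊆ M.des ∧ M.des ⊆ B),
      (-1:ℚ) ^ M.length) = ∑ V ∈ Finset.Icc A B, (-1:ℚ)^(V.card + 1) from ?_]
  · have := sum_Icc_neg_one_pow A B
    calc ∑ V ∈ Finset.Icc A B, (-1:ℚ)^(V.card+1)
        = (∑ V ∈ Finset.Icc A B, (-1:ℚ)^V.card) * (-1:ℚ) := by
          rw [Finset.sum_mul]; exact Finset.sum_congr rfl (fun W _ => by rw [pow_succ])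
      _ = _ := by rw [this]; by_cases h : A = B <;> simp [h, pow_succ]
  · refine Finset.sum_nbij' (fun M => M.des) (fun V => mkComp n V) ?_ ?_ ?_ ?_ ?_
    · intro M hM
      rw [Finset.mem_filter] at hM
      rw [Finset.mem_Icc]
      exact ⟨hM.2.1, hM.2.2⟩
    · intro V hV
      rw [Finset.mem_Icc] at hV
      rw [Finset.mem_filter]
      have : (mkComp n V).des = V := des_mkComp (hV.2.trans hB)
      exact ⟨Finset.mem_univ _, by rw [this]; exact hV⟩
    · intro M _
      exact mkComp_des M
    · intro V hV
      rw [Finset.mem_Icc] at hV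
      exact des_mkComp (hV.2.trans hB)
    · intro M hM
      rw [length_eq_card_des hn M]



/-! ### Concatenation of compositions -/

def desL (l : List ℕ) : Finset ℕ :=
  (Finset.range (l.length - 1)).image (fun i => (l.take (i+1)).sum)

theorem desL_blocks {n : ℕ} (c : Composition n) : desL c.blocks = c.des := rfl

theorem blocks_ne_nil {m : ℕ} (hm : 1 ≤ m) (c : Composition m) : c.blocks ≠ [] := by
  intro h
  have := c.blocks_sum
  rw [h] at this
  simp at this
  omega

theorem Sprod_append {m k : ℕ} (c : Composition m) (d : Composition k) :
    Sprod (c.append d) = Sprod c * Sprod d := by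
  rw [Sprod, Sprod, Sprod, append_blocks, List.map_append, List.prod_append]

theorem length_append {m k : ℕ} (c : Composition m) (d : Composition k) :
    (c.append d).length = c.length + d.length := by
  rw [Composition.length, append_blocks, List.length_append]

theorem sum_take_append_of_ge (l1 l2 : List ℕ) {i : ℕ} (h : l1.length ≤ i) :
    ((l1 ++ l2).take i).sum = l1.sum + (l2.take (i - l1.length)).sum := by
  have he : (l1 ++ l2).take i = l1 ++ l2.take (i - l1.length) := by
    rw [← List.take_length_add_append (i - l1.length)]
    congr 1
    omega
  rw [he, List.sum_append]

theorem desL_append (l1 l2 : List ℕ) (h1 : l1 ≠ []) (h2 : l2 ≠ []) :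
    desL (l1 ++ l2) = (desL l1 ∪ {l1.sum}) ∪ (desL l2).image (· + l1.sum) := by
  have hl1 : 1 ≤ l1.length := List.length_pos_iff.mpr h1
  have hl2 : 1 ≤ l2.length := List.length_pos_iff.mpr h2
  ext x
  simp only [desL, Finset.mem_union, Finset.mem_image, Finset.mem_range,
    Finset.mem_singleton, List.length_append]
  constructor
  · rintro ⟨i, hi, rfl⟩
    rcases lt_trichotomy (i+1) l1.length with h | h | h
    · left; left
      refine ⟨i, by omega, ?_⟩
      rw [List.take_append_of_le_length (by omega : i + 1 ≤ l1.length)]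
    · left; right
      rw [List.take_append_of_le_length (by omega : i + 1 ≤ l1.length), h, List.take_length]
    · right
      refine ⟨(l2.take (i + 1 - l1.length)).sum, ⟨i - l1.length, by omega, by congr 2; omega⟩, ?_⟩
      rw [sum_take_append_of_ge l1 l2 (by omega)]
      ring
  · intro hx
    rcases hx with (⟨i, hi, rfl⟩ | rfl) | ⟨y, ⟨i, hi, hy⟩, hxy⟩
    · refine ⟨i, by omega, ?_⟩
      rw [List.take_append_of_le_length (by omega : i + 1 ≤ l1.length)]
    · refine ⟨l1.length - 1, by omega, ?_⟩
      rw [show l1.length - 1 + 1 = l1.length by omega,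
        List.take_append_of_le_length (le_refl _), List.take_length]
    · refine ⟨l1.length + i, by omega, ?_⟩
      rw [sum_take_append_of_ge l1 l2 (by omega), show l1.length + i + 1 - l1.length = i + 1 by omega,
        hy, ← hxy]
      ring

theorem desL_subset_Ioo (l : List ℕ) (hl : ∀ x ∈ l, 0 < x) :
    desL l ⊆ Finset.Ioo 0 l.sum := by
  have : desL l = (Composition.mk l (fun {i} hi => hl i hi) rfl : Composition l.sum).des := rfl
  rw [this]
  exact Composition.des_subset_Ioo _

theorem desL_cons (m : ℕ) (l : List ℕ) (hl : l ≠ []) :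
    desL (m :: l) = insert m ((desL l).image (· + m)) := by
  have h := desL_append [m] l (by simp) hl
  simp only [List.singleton_append] at h
  rw [h]
  have : desL [m] = ∅ := by simp [desL]
  rw [this, Finset.empty_union, Finset.insert_eq]
  simp

/-- Reindexing a sum over pairs of compositions along concatenation. -/
theorem sum_comp_append {m k : ℕ} (hm : 1 ≤ m) (hk : 1 ≤ k) (X : Finset ℕ)
    (hX : X ⊆ Finset.Ioo 0 k)
    {E : Type*} [AddCommMonoid E]
    (F : Composition m → Composition k → E) (G : Composition (m+k) → E)
    (hFG : ∀ d D, G (d.append D) = F d D) :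
    ∑ p ∈ (Finset.univ ×ˢ Finset.univ.filter (fun D : Composition k => X ⊆ D.des)),
      F p.1 p.2
    = ∑ D ∈ Finset.univ.filter (fun D : Composition (m+k) =>
        insert m (X.image (· + m)) ⊆ D.des), G D := by
  have hdes : ∀ (d : Composition m) (D : Composition k),
      (d.append D).des = (d.des ∪ {m}) ∪ D.des.image (· + m) := by
    intro d D
    rw [← desL_blocks, append_blocks, desL_append _ _ (blocks_ne_nil hm d) (blocks_ne_nil hk D),
      d.blocks_sum]
    rfl
  refine Finset.sum_bij (fun p _ => p.1.append p.2) ?_ ?_ ?_ ?_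
  · rintro ⟨d, D⟩ hp
    simp only [Finset.mem_product, Finset.mem_filter, Finset.mem_univ, true_and] at hp
    simp only [Finset.mem_filter, Finset.mem_univ, true_and]
    rw [hdes]
    intro x hx
    simp only [Finset.mem_insert, Finset.mem_image] at hx
    rcases hx with rfl | ⟨y, hy, rfl⟩
    · simp
    · exact Finset.mem_union_right _ (Finset.mem_image_of_mem _ (hp hy))
  · rintro ⟨d1, D1⟩ hp1 ⟨d2, D2⟩ hp2 he
    have hb : d1.blocks ++ D1.blocks = d2.blocks ++ D2.blocks := congrArg Composition.blocks he
    have hlen : d1.blocks.length = d2.blocks.length := by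
      by_contra hne
      -- use strict monotonicity of partial sums of the concatenated list
      have hpos : ∀ x ∈ d1.blocks ++ D1.blocks, 0 < x := by
        intro x hx
        rcases List.mem_append.mp hx with h | h
        · exact d1.blocks_pos h
        · exact D1.blocks_pos h
      set C : Composition (m+k) := ⟨d1.blocks ++ D1.blocks, fun {i} hi => hpos i hi, by
        rw [List.sum_append, d1.blocks_sum, D1.blocks_sum]⟩ with hC
      have hs1 : C.sizeUpTo d1.blocks.length = m := by
        show ((d1.blocks ++ D1.blocks).take d1.blocks.length).sum = m
        rw [List.take_append_of_le_length (le_refl _), List.take_length, d1.blocks_sum]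
      have hs2 : C.sizeUpTo d2.blocks.length = m := by
        show ((d1.blocks ++ D1.blocks).take d2.blocks.length).sum = m
        rw [hb, List.take_append_of_le_length (le_refl _), List.take_length, d2.blocks_sum]
      have hle1 : d1.blocks.length ≤ C.length := by
        show d1.blocks.length ≤ (d1.blocks ++ D1.blocks).length
        simp
      have hle2 : d2.blocks.length ≤ C.length := by
        have : C.length = (d2.blocks ++ D2.blocks).length := by
          show (d1.blocks ++ D1.blocks).length = _
          rw [hb]
        rw [this]
        simp
      rcases Nat.lt_or_ge d1.blocks.length d2.blocks.length with hlt | hge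
      · have h1 : C.sizeUpTo d1.blocks.length < C.sizeUpTo (d1.blocks.length + 1) :=
          C.sizeUpTo_strict_mono (by omega)
        have h2 : C.sizeUpTo (d1.blocks.length + 1) ≤ C.sizeUpTo d2.blocks.length :=
          C.monotone_sizeUpTo (by omega)
        omega
      · have hlt : d2.blocks.length < d1.blocks.length := by omega
        have h1 : C.sizeUpTo d2.blocks.length < C.sizeUpTo (d2.blocks.length + 1) :=
          C.sizeUpTo_strict_mono (by omega)
        have h2 : C.sizeUpTo (d2.blocks.length + 1) ≤ C.sizeUpTo d1.blocks.length :=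
          C.monotone_sizeUpTo (by omega)
        omega
    obtain ⟨e1, e2⟩ := List.append_inj hb hlen
    have : d1 = d2 := Composition.ext e1
    have : D1 = D2 := Composition.ext e2
    simp_all
  · intro D hD
    simp only [Finset.mem_filter, Finset.mem_univ, true_and] at hD
    have hmD : m ∈ D.des := hD (Finset.mem_insert_self _ _)
    rw [Composition.mem_des_iff] at hmD
    obtain ⟨h0, hmn, i, hi⟩ := hmD
    have hi1 : 1 ≤ i := by
      rcases Nat.eq_zero_or_pos i with rfl | h
      · simp at hi; omega
      · exact h
    have hil : i < D.length := by
      by_contra h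
      push_neg at h
      rw [show (D.blocks.take i).sum = D.sizeUpTo i from rfl, D.sizeUpTo_ofLength_le i h] at hi
      omega
    set d : Composition m := ⟨D.blocks.take i, fun {x} hx => D.blocks_pos (List.mem_of_mem_take hx), hi⟩ with hd
    have hdrop : (D.blocks.drop i).sum = k := by
      have := D.blocks_sum
      have h2 : (D.blocks.take i).sum + (D.blocks.drop i).sum = m + k := by
        rw [← List.sum_append, List.take_append_drop, this]
      omega
    set D' : Composition k := ⟨D.blocks.drop i, fun {x} hx => D.blocks_pos (List.mem_of_mem_drop hx), hdrop⟩ with hD'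
    have happ : d.append D' = D := by
      apply Composition.ext
      rw [append_blocks]
      exact List.take_append_drop i D.blocks
    refine ⟨⟨d, D'⟩, ?_, happ⟩
    simp only [Finset.mem_product, Finset.mem_filter, Finset.mem_univ, true_and]
    intro x hx
    have hx' := hX hx
    simp only [Finset.mem_Ioo] at hx'
    have hxm : x + m ∈ D.des := hD (Finset.mem_insert_of_mem (Finset.mem_image_of_mem _ hx))
    rw [← happ, hdes] at hxm
    simp only [Finset.mem_union, Finset.mem_singleton, Finset.mem_image] at hxm
    rcases hxm with (h | h) | ⟨y, hy, hxy⟩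
    · exfalso
      have := d.des_subset_Ioo h
      simp only [Finset.mem_Ioo] at this
      omega
    · omega
    · have : y = x := by omega
      exact this ▸ hy
  · rintro ⟨d, D⟩ hp
    exact (hFG d D).symm


/-! ### The Λ-product formula -/

def LamProd {n : ℕ} (c : Composition n) : NCSym := (c.blocks.map Lam).prod

theorem Lam_eq (m : ℕ) :
    Lam m = ∑ D : Composition m, (-1:ℚ)^(m + D.length) • Sprod D := by
  rw [Lam, Rib]
  rw [Finset.filter_true_of_mem (fun d _ => by
    rw [Composition.des_ones]
    exact Composition.des_subset_Ioo d)]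
  apply Finset.sum_congr rfl
  intro d _
  rw [Composition.ones_length]

theorem comp_zero_blocks (c : Composition 0) : c.blocks = [] := by
  cases hb : c.blocks with
  | nil => rfl
  | cons a t =>
    exfalso
    have h1 := c.blocks_pos (by rw [hb]; exact List.mem_cons_self)
    have hs := c.blocks_sum
    rw [hb] at hs
    simp only [List.sum_cons] at hs
    omega

theorem comp_zero_eq (c d : Composition 0) : c = d :=
  Composition.ext (by rw [comp_zero_blocks, comp_zero_blocks])

def c0 : Composition 0 := ⟨[], by intro i h; simp at h, rfl⟩

theorem univ_comp_zero : (Finset.univ : Finset (Composition 0)) = {c0} := by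
  ext c
  simp [comp_zero_eq c c0]

theorem lamProd_list (l : List ℕ) (hl : ∀ x ∈ l, 0 < x) :
    (l.map Lam).prod
      = ∑ D ∈ Finset.univ.filter (fun D : Composition l.sum => desL l ⊆ D.des),
          (-1:ℚ)^(l.sum + D.length) • Sprod D := by
  induction l with
  | nil =>
    rw [show ((List.nil : List ℕ).map Lam).prod = 1 by simp]
    rw [Finset.filter_true_of_mem (fun d _ => by simp [desL])]
    erw [univ_comp_zero, Finset.sum_singleton]
    show (1 : NCSym) = (-1:ℚ)^((0:ℕ) + c0.length) • Sprod c0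
    have h1 : c0.length = 0 := rfl
    have h2 : Sprod c0 = 1 := by simp [Sprod, c0]
    rw [h1, h2]
    norm_num
  | cons m l' ih =>
    have hm : 1 ≤ m := hl m (List.mem_cons_self)
    have hl' : ∀ x ∈ l', 0 < x := fun x hx => hl x (List.mem_cons_of_mem m hx)
    rcases eq_or_ne l' [] with rfl | hne
    · simp only [List.map_cons, List.map_nil, List.prod_cons, List.prod_nil, mul_one]
      rw [Lam_eq m]
      rw [Finset.filter_true_of_mem (fun d _ => by simp [desL])]
      rfl
    · have hk : 1 ≤ l'.sum := by
        have := List.sum_pos l' hl' hne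
        omega
      simp only [List.map_cons, List.prod_cons]
      rw [Lam_eq m, ih hl', Finset.sum_mul_sum]
      rw [show ∑ d : Composition m, ∑ D' ∈ Finset.univ.filter
            (fun D' : Composition l'.sum => desL l' ⊆ D'.des),
            ((-1:ℚ)^(m + d.length) • Sprod d) * ((-1:ℚ)^(l'.sum + D'.length) • Sprod D')
          = ∑ p ∈ (Finset.univ ×ˢ Finset.univ.filter
              (fun D' : Composition l'.sum => desL l' ⊆ D'.des)),
            (-1:ℚ)^((m + l'.sum) + (p.1.length + p.2.length)) • (Sprod p.1 * Sprod p.2) from ?_]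
      · rw [sum_comp_append hm hk (desL l') (desL_subset_Ioo l' hl')
            (fun d D' => (-1:ℚ)^((m + l'.sum) + (d.length + D'.length)) • (Sprod d * Sprod D'))
            (fun D => (-1:ℚ)^((m + l'.sum) + D.length) • Sprod D)
            (fun d D => by rw [Sprod_append, length_append])]
        rw [← desL_cons m l' hne]
        rfl
      · rw [Finset.sum_product]
        apply Finset.sum_congr rfl
        intro d _
        apply Finset.sum_congr rfl
        intro D' _
        rw [smul_mul_smul_comm, ← pow_add]
        congr 2
        ring

theorem LamProd_eq {n : ℕ} (M : Composition n) :
    LamProd M = ∑ D ∈ Finset.univ.filter (fun D : Composition n => M.des ⊆ D.des),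
      (-1:ℚ)^(n + D.length) • Sprod D := by
  obtain ⟨bl, hpos, hsum⟩ := M
  subst hsum
  exact lamProd_list bl (fun x hx => hpos hx)


/-! ### Helpers for sum manipulation -/

theorem neg_one_pow_mod {a b : ℕ} (h : a % 2 = b % 2) : (-1:ℚ)^a = (-1:ℚ)^b := by
  rcases Nat.even_or_odd a with ha | ha
  · have hb : Even b := by rw [Nat.even_iff] at ha ⊢; omega
    rw [Even.neg_one_pow ha, Even.neg_one_pow hb]
  · have hb : Odd b := by rw [Nat.odd_iff] at ha ⊢; omega
    rw [Odd.neg_one_pow ha, Odd.neg_one_pow hb]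

theorem helper_swap {α β M : Type*} [Fintype α] [Fintype β] [AddCommMonoid M]
    (p : α → Prop) [DecidablePred p] (q : α → β → Prop) [∀ a b, Decidable (q a b)]
    (f : α → β → M) :
    ∑ a ∈ Finset.univ.filter p, ∑ b ∈ Finset.univ.filter (q a), f a b
    = ∑ b : β, ∑ a : α, if p a ∧ q a b then f a b else 0 := by
  have step : ∑ a ∈ Finset.univ.filter p, ∑ b ∈ Finset.univ.filter (q a), f a b
      = ∑ a : α, ∑ b : β, if p a ∧ q a b then f a b else 0 := by
    rw [Finset.sum_filter]
    apply Finset.sum_congr rfl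
    intro a _
    by_cases hp : p a
    · rw [if_pos hp, Finset.sum_filter]
      apply Finset.sum_congr rfl
      intro b _
      simp [hp]
    · rw [if_neg hp]
      symm
      apply Finset.sum_eq_zero
      intro b _
      simp [hp]
  rw [step, Finset.sum_comm]

/-- Evaluate an inner interval sum against a fixed vector. -/
theorem helper_inner {n : ℕ} (hn : 1 ≤ n) (A B : Finset ℕ) (hB : B ⊆ Finset.Ioo 0 n)
    {W : Type*} [AddCommMonoid W] [Module ℚ W] (z : W) :
    (∑ M : Composition n, if A ⊆ M.des ∧ M.des ⊆ B then (-1:ℚ)^M.length • z else 0)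
    = (if A = B then (-1:ℚ)^(A.card+1) else 0) • z := by
  rw [← sum_des_interval hn A B hB, Finset.sum_smul]
  rw [← Finset.sum_filter]


theorem des_inj {n : ℕ} {D M : Composition n} (h : D.des = M.des) : D = M := by
  rw [← Composition.mkComp_des D, ← Composition.mkComp_des M, h]

open Composition in
/-- (P3): ribbons in terms of Λ-products. -/
theorem Rib_eq_lamProd {n : ℕ} (hn : 1 ≤ n) (K : Composition n) :
    Rib K = ∑ M ∈ Finset.univ.filter
        (fun M : Composition n => M.des ⊆ Finset.Ioo 0 n \ K.des),
      (-1:ℚ)^(n + K.length + M.length + 1) • LamProd M := by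
  have step1 : ∀ M : Composition n, (-1:ℚ)^(n + K.length + M.length + 1) • LamProd M
      = ∑ D ∈ Finset.univ.filter (fun D : Composition n => M.des ⊆ D.des),
          (-1:ℚ)^(M.length) • ((-1:ℚ)^(K.length + D.length + 1) • Sprod D) := by
    intro M
    rw [LamProd_eq M, Finset.smul_sum]
    apply Finset.sum_congr rfl
    intro D _
    rw [smul_smul, smul_smul, ← pow_add, ← pow_add]
    congr 1
    apply neg_one_pow_mod
    omega
  rw [Finset.sum_congr rfl (fun M _ => step1 M), helper_swap]
  have step2 : ∀ D : Composition n,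
      (∑ M : Composition n, if (M.des ⊆ Finset.Ioo 0 n \ K.des ∧ M.des ⊆ D.des)
        then (-1:ℚ)^(M.length) • ((-1:ℚ)^(K.length + D.length + 1) • Sprod D) else 0)
      = (if (∅ : Finset ℕ) = (Finset.Ioo 0 n \ K.des) ∩ D.des then (-1:ℚ)^((∅ : Finset ℕ).card+1) else 0) •
          ((-1:ℚ)^(K.length + D.length + 1) • Sprod D) := by
    intro D
    rw [← helper_inner hn ∅ ((Finset.Ioo 0 n \ K.des) ∩ D.des) (by
        intro x hx
        exact (Finset.mem_sdiff.mp (Finset.mem_inter.mp hx).1).1) _]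
    apply Finset.sum_congr rfl
    intro M _
    refine if_congr ?_ rfl rfl
    rw [Finset.subset_inter_iff]
    simp
  rw [Finset.sum_congr rfl (fun D _ => step2 D)]
  rw [Rib, Finset.sum_filter]
  apply Finset.sum_congr rfl
  intro D _
  have hiff : ((∅ : Finset ℕ) = (Finset.Ioo 0 n \ K.des) ∩ D.des) ↔ D.des ⊆ K.des := by
    constructor
    · intro h x hx
      by_contra hK
      have hx' := D.des_subset_Ioo hx
      have : x ∈ (Finset.Ioo 0 n \ K.des) ∩ D.des :=
        Finset.mem_inter.mpr ⟨Finset.mem_sdiff.mpr ⟨hx', hK⟩, hx⟩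
      rw [← h] at this
      simp at this
    · intro h
      symm
      rw [Finset.eq_empty_iff_forall_notMem]
      intro x hx
      obtain ⟨h1, h2⟩ := Finset.mem_inter.mp hx
      exact (Finset.mem_sdiff.mp h1).2 (h h2)
  by_cases h : D.des ⊆ K.des
  · rw [if_pos (hiff.mpr h), if_pos h, smul_smul, ← pow_add]
    congr 1
    simp only [Finset.card_empty]
    apply neg_one_pow_mod
    omega
  · rw [if_neg (fun he => h (hiff.mp he)), zero_smul, if_neg h]

open Composition in
/-- (P4): complete functions in terms of ribbons. -/
theorem Sprod_eq_rib {n : ℕ} (hn : 1 ≤ n) (M : Composition n) :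
    Sprod M = ∑ J ∈ Finset.univ.filter (fun J : Composition n => J.des ⊆ M.des), Rib J := by
  have step1 : ∀ J : Composition n, Rib J
      = ∑ D ∈ Finset.univ.filter (fun D : Composition n => D.des ⊆ J.des),
          (-1:ℚ)^(J.length) • ((-1:ℚ)^(D.length) • Sprod D) := by
    intro J
    rw [Rib]
    apply Finset.sum_congr rfl
    intro D _
    rw [smul_smul, ← pow_add]
  rw [Finset.sum_congr rfl (fun J _ => step1 J), helper_swap]
  have step2 : ∀ D : Composition n,
      (∑ J : Composition n, if (J.des ⊆ M.des ∧ D.des ⊆ J.des)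
        then (-1:ℚ)^(J.length) • ((-1:ℚ)^(D.length) • Sprod D) else 0)
      = (if D.des = M.des then (-1:ℚ)^(D.des.card+1) else 0) •
          ((-1:ℚ)^(D.length) • Sprod D) := by
    intro D
    rw [← helper_inner hn D.des M.des (M.des_subset_Ioo) _]
    apply Finset.sum_congr rfl
    intro J _
    refine if_congr ?_ rfl rfl
    exact and_comm
  rw [Finset.sum_congr rfl (fun D _ => step2 D)]
  rw [Finset.sum_eq_single_of_mem M (Finset.mem_univ M) ?_]
  · rw [if_pos rfl, smul_smul, ← pow_add]
    have he : (-1:ℚ)^(M.des.card + 1 + M.length) = (-1:ℚ)^(0:ℕ) := by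
      apply neg_one_pow_mod
      rw [length_eq_card_des hn M]
      omega
    rw [he, pow_zero, one_smul]
  · intro D _ hD
    rw [if_neg (fun h => hD (des_inj h)), zero_smul]

open Composition in
/-- (P5): Λ-products in terms of ribbons. -/
theorem lamProd_eq_rib {n : ℕ} (hn : 1 ≤ n) (M : Composition n) :
    LamProd M = ∑ I ∈ Finset.univ.filter
        (fun I : Composition n => Finset.Ioo 0 n \ M.des ⊆ I.des), Rib I := by
  have step1 : ∀ I : Composition n, Rib I
      = ∑ D ∈ Finset.univ.filter (fun D : Composition n => D.des ⊆ I.des),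
          (-1:ℚ)^(I.length) • ((-1:ℚ)^(D.length) • Sprod D) := by
    intro I
    rw [Rib]
    apply Finset.sum_congr rfl
    intro D _
    rw [smul_smul, ← pow_add]
  rw [Finset.sum_congr rfl (fun I _ => step1 I), helper_swap]
  have step2 : ∀ D : Composition n,
      (∑ I : Composition n, if (Finset.Ioo 0 n \ M.des ⊆ I.des ∧ D.des ⊆ I.des)
        then (-1:ℚ)^(I.length) • ((-1:ℚ)^(D.length) • Sprod D) else 0)
      = (if (Finset.Ioo 0 n \ M.des) ∪ D.des = Finset.Ioo 0 n
          then (-1:ℚ)^(((Finset.Ioo 0 n \ M.des) ∪ D.des).card+1) else 0) •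
          ((-1:ℚ)^(D.length) • Sprod D) := by
    intro D
    rw [← helper_inner hn ((Finset.Ioo 0 n \ M.des) ∪ D.des) (Finset.Ioo 0 n)
        (Finset.Subset.refl _) _]
    apply Finset.sum_congr rfl
    intro I _
    refine if_congr ?_ rfl rfl
    rw [Finset.union_subset_iff]
    constructor
    · rintro ⟨h1, h2⟩
      exact ⟨⟨h1, h2⟩, I.des_subset_Ioo⟩
    · rintro ⟨⟨h1, h2⟩, _⟩
      exact ⟨h1, h2⟩
  rw [Finset.sum_congr rfl (fun D _ => step2 D)]
  rw [LamProd_eq, Finset.sum_filter]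
  apply Finset.sum_congr rfl
  intro D _
  have hiff : ((Finset.Ioo 0 n \ M.des) ∪ D.des = Finset.Ioo 0 n) ↔ M.des ⊆ D.des := by
    constructor
    · intro h x hx
      have hx' := M.des_subset_Ioo hx
      have : x ∈ (Finset.Ioo 0 n \ M.des) ∪ D.des := by rw [h]; exact hx'
      rcases Finset.mem_union.mp this with h1 | h1
      · exact absurd hx (Finset.mem_sdiff.mp h1).2
      · exact h1
    · intro h
      apply Finset.Subset.antisymm
      · exact Finset.union_subset (Finset.sdiff_subset) D.des_subset_Ioo
      · intro x hx
        by_cases hM : x ∈ M.des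
        · exact Finset.mem_union_right _ (h hM)
        · exact Finset.mem_union_left _ (Finset.mem_sdiff.mpr ⟨hx, hM⟩)
  by_cases h : M.des ⊆ D.des
  · rw [if_pos (hiff.mpr h), if_pos h, smul_smul, ← pow_add]
    congr 1
    have hcard : ((Finset.Ioo 0 n \ M.des) ∪ D.des).card = (Finset.Ioo 0 n).card := by
      rw [hiff.mpr h]
    rw [hcard, Nat.card_Ioo]
    apply neg_one_pow_mod
    omega
  · rw [if_neg (fun he => h (hiff.mp he)), zero_smul, if_neg h]


/-! ### Final assembly -/

theorem prod_tmul_list (l : List ℕ) :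
    (l.map (fun m => Lam m ⊗ₜ[ℚ] Scomp m)).prod
      = (l.map Lam).prod ⊗ₜ[ℚ] (l.map Scomp).prod := by
  induction l with
  | nil => simp [Algebra.TensorProduct.one_def]
  | cons a t ih =>
    simp only [List.map_cons, List.prod_cons, ih, Algebra.TensorProduct.tmul_mul_tmul]

theorem j_lamProd (j : NCSym →ₐ[ℚ] NCSym ⊗[ℚ] NCSym)
    (hj : ∀ n : ℕ, 1 ≤ n → j (Lam n) = Lam n ⊗ₜ[ℚ] Scomp n)
    {n : ℕ} (M : Composition n) : j (LamProd M) = LamProd M ⊗ₜ[ℚ] Sprod M := by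
  rw [LamProd, map_list_prod, List.map_map]
  rw [show M.blocks.map (⇑j ∘ Lam) = M.blocks.map (fun m => Lam m ⊗ₜ[ℚ] Scomp m) from
    List.map_congr_left (fun m hm => hj m (M.blocks_pos hm))]
  rw [prod_tmul_list]
  rfl

open Composition in
theorem compl_subset_comm' {n : ℕ} (M I : Composition n) :
    Finset.Ioo 0 n \ M.des ⊆ I.des ↔ Finset.Ioo 0 n \ I.des ⊆ M.des := by
  constructor <;> intro h x hx <;> obtain ⟨h1, h2⟩ := Finset.mem_sdiff.mp hx <;> by_contra hc
  · exact h2 (h (Finset.mem_sdiff.mpr ⟨h1, hc⟩))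
  · exact h2 (h (Finset.mem_sdiff.mpr ⟨h1, hc⟩))

open Composition in
theorem cond_iff {n : ℕ} (I J K : Composition n) :
    ((Finset.Ioo 0 n \ I.des) ∪ J.des = Finset.Ioo 0 n \ K.des) ↔ I.des \ J.des = K.des := by
  have hI := I.des_subset_Ioo
  have hJ := J.des_subset_Ioo
  have hK := K.des_subset_Ioo
  constructor
  · intro h
    ext x
    have hx := Finset.ext_iff.mp h x
    simp only [Finset.mem_union, Finset.mem_sdiff] at hx
    simp only [Finset.mem_sdiff]
    have fI : x ∈ I.des → x ∈ Finset.Ioo 0 n := fun hh => hI hh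
    have fJ : x ∈ J.des → x ∈ Finset.Ioo 0 n := fun hh => hJ hh
    have fK : x ∈ K.des → x ∈ Finset.Ioo 0 n := fun hh => hK hh
    tauto
  · intro h
    ext x
    have hx := Finset.ext_iff.mp h x
    simp only [Finset.mem_sdiff] at hx
    simp only [Finset.mem_union, Finset.mem_sdiff]
    have fI : x ∈ I.des → x ∈ Finset.Ioo 0 n := fun hh => hI hh
    have fJ : x ∈ J.des → x ∈ Finset.Ioo 0 n := fun hh => hJ hh
    have fK : x ∈ K.des → x ∈ Finset.Ioo 0 n := fun hh => hK hh
    tauto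

open Composition

/-- For the algebra morphism `j : Sym → Sym ⊗ Sym` determined by
`j(Λₙ) = Λₙ ⊗ Sₙ`, the image of the ribbon function `R_K` of degree `n` is
`Σ_{I\J = K} R_I ⊗ R_J`, the sum being over pairs of compositions `(I,J)` of
`n` with `Des I \ Des J = Des K`. -/
theorem stmt10 (j : NCSym →ₐ[ℚ] NCSym ⊗[ℚ] NCSym)
    (hj : ∀ n : ℕ, 1 ≤ n → j (Lam n) = Lam n ⊗ₜ[ℚ] Scomp n)
    (n : ℕ) (K : Composition n) :
    j (Rib K)
    = ∑ p ∈ Finset.univ.filter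
        (fun p : Composition n × Composition n => p.1.des \ p.2.des = K.des),
        Rib p.1 ⊗ₜ[ℚ] Rib p.2 := by
  rcases Nat.eq_zero_or_pos n with rfl | hn
  · -- degenerate case n = 0
    have hK : K = c0 := comp_zero_eq K c0
    subst hK
    have hdes : c0.des = ∅ := rfl
    have h1 : Rib c0 = 1 := by
      rw [Rib, univ_comp_zero, Finset.filter_singleton, if_pos (Finset.Subset.refl _),
        Finset.sum_singleton]
      have h2 : Sprod c0 = 1 := by simp [Sprod, c0]
      have h3 : c0.length = 0 := rfl
      rw [h2, h3]
      norm_num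
    rw [h1, map_one]
    rw [show Finset.univ.filter
        (fun p : Composition 0 × Composition 0 => p.1.des \ p.2.des = c0.des)
        = {(c0, c0)} from ?_]
    · rw [Finset.sum_singleton, h1, Algebra.TensorProduct.one_def]
    · ext p
      simp only [Finset.mem_filter, Finset.mem_univ, true_and, Finset.mem_singleton]
      constructor
      · intro _
        exact Prod.ext (comp_zero_eq _ _) (comp_zero_eq _ _)
      · intro h
        subst h
        rw [hdes]
        simp
  · -- main case
    rw [Rib_eq_lamProd hn K, map_sum]
    have hterm : ∀ M : Composition n,
        j ((-1:ℚ)^(n + K.length + M.length + 1) • LamProd M)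
        = ∑ p ∈ Finset.univ.filter (fun p : Composition n × Composition n =>
            Finset.Ioo 0 n \ M.des ⊆ p.1.des ∧ p.2.des ⊆ M.des),
            (-1:ℚ)^(M.length) • ((-1:ℚ)^(n + K.length + 1) • (Rib p.1 ⊗ₜ[ℚ] Rib p.2)) := by
      intro M
      rw [map_smul, j_lamProd j hj M]
      rw [lamProd_eq_rib hn M, Sprod_eq_rib hn M]
      rw [TensorProduct.sum_tmul]
      rw [Finset.smul_sum]
      rw [Finset.sum_congr rfl (fun I _ => by rw [TensorProduct.tmul_sum, Finset.smul_sum])]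
      rw [← Finset.sum_product']
      rw [← Finset.filter_product, Finset.univ_product_univ]
      apply Finset.sum_congr rfl
      intro p _
      rw [smul_smul, ← pow_add]
      congr 1
      apply neg_one_pow_mod
      omega
    rw [Finset.sum_congr rfl (fun M _ => hterm M), helper_swap]
    have hstep : ∀ p : Composition n × Composition n,
        (∑ M : Composition n, if (M.des ⊆ Finset.Ioo 0 n \ K.des ∧
            (Finset.Ioo 0 n \ M.des ⊆ p.1.des ∧ p.2.des ⊆ M.des))
          then (-1:ℚ)^(M.length) • ((-1:ℚ)^(n + K.length + 1) • (Rib p.1 ⊗ₜ[ℚ] Rib p.2)) else 0)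
        = (if (Finset.Ioo 0 n \ p.1.des) ∪ p.2.des = Finset.Ioo 0 n \ K.des
            then (-1:ℚ)^(((Finset.Ioo 0 n \ p.1.des) ∪ p.2.des).card+1) else 0) •
            ((-1:ℚ)^(n + K.length + 1) • (Rib p.1 ⊗ₜ[ℚ] Rib p.2)) := by
      intro p
      rw [← helper_inner hn ((Finset.Ioo 0 n \ p.1.des) ∪ p.2.des) (Finset.Ioo 0 n \ K.des)
          (Finset.sdiff_subset) _]
      apply Finset.sum_congr rfl
      intro M _
      refine if_congr ?_ rfl rfl
      rw [Finset.union_subset_iff, ← compl_subset_comm' M p.1]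
      tauto
    rw [Finset.sum_congr rfl (fun p _ => hstep p)]
    rw [Finset.sum_filter]
    apply Finset.sum_congr rfl
    intro p _
    by_cases h : p.1.des \ p.2.des = K.des
    · rw [if_pos ((cond_iff p.1 p.2 K).mpr h), if_pos h, smul_smul, ← pow_add]
      have hcard : ((Finset.Ioo 0 n \ p.1.des) ∪ p.2.des).card = n - 1 - K.des.card := by
        rw [(cond_iff p.1 p.2 K).mpr h, Finset.card_sdiff_of_subset (K.des_subset_Ioo), Nat.card_Ioo]
        omega
      have hle : K.des.card ≤ n - 1 := by
        have := Finset.card_le_card (K.des_subset_Ioo)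
        rwa [Nat.card_Ioo] at this
      have he : (-1:ℚ)^(((Finset.Ioo 0 n \ p.1.des) ∪ p.2.des).card + 1 + (n + K.length + 1))
          = (-1:ℚ)^(0:ℕ) := by
        apply neg_one_pow_mod
        rw [hcard, length_eq_card_des hn K]
        omega
      rw [he, pow_zero, one_smul]
    · rw [if_neg (fun hc => h ((cond_iff p.1 p.2 K).mp hc)), if_neg h, zero_smul]
end

section
/- For permutations, let b_n = #{(σ,τ) ∈ S_n² : Des(σ) ∩ Des(τ) = ∅} be the number of pairs (σ,τ) ∈ S_n × S_n with Des(σ) ∩ Des(τ) = ∅. Then Σ_{n≥0} b_n t^n/(n!)² = 1/J_0(2√t). -/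
open Finset

/-- The descent set of a permutation of `{0,…,n-1}`. -/
def permDes {n : ℕ} (σ : Equiv.Perm (Fin n)) : Finset (Fin n) :=
  Finset.univ.filter (fun i : Fin n =>
    ∃ h : (i : ℕ) + 1 < n, σ ⟨(i : ℕ) + 1, h⟩ < σ i)

/-- Descent set as a set of naturals. -/
def desN {n : ℕ} (σ : Equiv.Perm (Fin n)) : Finset ℕ := (permDes σ).image Fin.val

lemma mem_desN {n : ℕ} {σ : Equiv.Perm (Fin n)} {i : ℕ} :
    i ∈ desN σ ↔ ∃ h : i + 1 < n, σ ⟨i + 1, h⟩ < σ ⟨i, Nat.lt_of_succ_lt h⟩ := by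
  constructor
  · rintro hi
    simp only [desN, mem_image, permDes, mem_filter, mem_univ, true_and] at hi
    obtain ⟨a, ⟨h, ha⟩, rfl⟩ := hi
    exact ⟨h, by simpa using ha⟩
  · rintro ⟨h, hlt⟩
    simp only [desN, mem_image, permDes, mem_filter, mem_univ, true_and]
    exact ⟨⟨i, Nat.lt_of_succ_lt h⟩, ⟨h, by simpa using hlt⟩, rfl⟩

lemma desN_subset_range {n : ℕ} (σ : Equiv.Perm (Fin n)) : desN σ ⊆ Finset.range (n-1) := by
  intro i hi
  rw [mem_desN] at hi
  obtain ⟨h, -⟩ := hi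
  simp only [Finset.mem_range]
  omega

/-- Number of permutations of `Fin n` whose descent set contains `U`. -/
def Dcnt (n : ℕ) (U : Finset ℕ) : ℕ :=
  (Finset.univ.filter fun σ : Equiv.Perm (Fin n) => U ⊆ desN σ).card

/-- Number of pairs with disjoint descent sets. -/
def bcnt (n : ℕ) : ℕ :=
  ((Finset.univ.filter
        (fun p : Equiv.Perm (Fin n) × Equiv.Perm (Fin n) =>
          permDes p.1 ∩ permDes p.2 = ∅)).card)

lemma lemmaA (n : ℕ) :
    (bcnt n : ℤ) =
      ∑ U ∈ (Finset.range (n-1)).powerset, (-1 : ℤ) ^ U.card * (Dcnt n U)^2 := by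
  have key : ∀ σ τ : Equiv.Perm (Fin n),
      (∑ U ∈ (Finset.range (n-1)).powerset,
        (-1 : ℤ) ^ U.card * (if U ⊆ desN σ then 1 else 0) * (if U ⊆ desN τ then 1 else 0))
      = if permDes σ ∩ permDes τ = ∅ then 1 else 0 := by
    intro σ τ
    have hsub : desN σ ∩ desN τ ⊆ Finset.range (n-1) :=
      (Finset.inter_subset_left).trans (desN_subset_range σ)
    have h1 : ∀ U : Finset ℕ, U ⊆ desN σ ∩ desN τ ↔ (U ⊆ desN σ ∧ U ⊆ desN τ) := by
      intro U; simp [Finset.subset_inter_iff]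
    rw [← Finset.sum_subset (Finset.powerset_mono.mpr hsub)]
    · have : (∑ U ∈ (desN σ ∩ desN τ).powerset,
          (-1 : ℤ) ^ U.card * (if U ⊆ desN σ then 1 else 0) * (if U ⊆ desN τ then 1 else 0))
          = ∑ U ∈ (desN σ ∩ desN τ).powerset, (-1 : ℤ) ^ U.card := by
        apply Finset.sum_congr rfl
        intro U hU
        rw [Finset.mem_powerset] at hU
        rw [if_pos (hU.trans Finset.inter_subset_left), if_pos (hU.trans Finset.inter_subset_right)]
        ring
      rw [this, Finset.sum_powerset_neg_one_pow_card]
      have hiff : desN σ ∩ desN τ = ∅ ↔ permDes σ ∩ permDes τ = ∅ := by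
        rw [desN, desN, ← Finset.image_inter _ _ Fin.val_injective, Finset.image_eq_empty]
      simp only [hiff]
    · intro U hU hU2
      rw [Finset.mem_powerset] at hU2
      rw [h1] at hU2
      rcases not_and_or.mp hU2 with h | h
      · rw [if_neg h]; ring
      · rw [if_neg h]; ring
  have expand : ∀ U : Finset ℕ,
      ((Dcnt n U : ℤ)) = ∑ σ : Equiv.Perm (Fin n), (if U ⊆ desN σ then 1 else 0) := by
    intro U
    rw [Dcnt, ← Finset.sum_boole]
  calc (bcnt n : ℤ)
      = ∑ p : Equiv.Perm (Fin n) × Equiv.Perm (Fin n),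
          (if permDes p.1 ∩ permDes p.2 = ∅ then 1 else 0) := by
        rw [bcnt, ← Finset.sum_boole]
    _ = ∑ σ : Equiv.Perm (Fin n), ∑ τ : Equiv.Perm (Fin n),
          (if permDes σ ∩ permDes τ = ∅ then 1 else 0) := by
        rw [← Finset.sum_product']
        rfl
    _ = ∑ σ : Equiv.Perm (Fin n), ∑ τ : Equiv.Perm (Fin n),
        (∑ U ∈ (Finset.range (n-1)).powerset,
        (-1 : ℤ) ^ U.card * (if U ⊆ desN σ then 1 else 0) * (if U ⊆ desN τ then 1 else 0)) := by
        simp_rw [key]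
    _ = ∑ σ : Equiv.Perm (Fin n), ∑ U ∈ (Finset.range (n-1)).powerset,
          ∑ τ : Equiv.Perm (Fin n),
        ((-1 : ℤ) ^ U.card * (if U ⊆ desN σ then 1 else 0) * (if U ⊆ desN τ then 1 else 0)) :=
        Finset.sum_congr rfl fun σ _ => Finset.sum_comm
    _ = ∑ U ∈ (Finset.range (n-1)).powerset, ∑ σ : Equiv.Perm (Fin n),
          ∑ τ : Equiv.Perm (Fin n),
        ((-1 : ℤ) ^ U.card * (if U ⊆ desN σ then 1 else 0) * (if U ⊆ desN τ then 1 else 0)) :=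
        Finset.sum_comm
    _ = ∑ U ∈ (Finset.range (n-1)).powerset, (-1 : ℤ) ^ U.card * (Dcnt n U)^2 := by
        apply Finset.sum_congr rfl
        intro U _
        simp_rw [← Finset.mul_sum, ← Finset.sum_mul, ← Finset.mul_sum]
        rw [expand U]
        ring


section psi
variable {n c : ℕ} (hcn : c ≤ n) (A : Finset (Fin n)) (hA : A.card = c)

lemma compl_card (hA : A.card = c) : (Aᶜ : Finset (Fin n)).card = n - c := by
  rw [Finset.card_compl, hA, Fintype.card_fin]

def ψfun (σ' : Equiv.Perm (Fin (n - c))) : Fin n → Fin n := fun i =>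
  if h : (i : ℕ) < c then
    A.orderEmbOfFin hA ⟨c - 1 - (i : ℕ), by omega⟩
  else
    (Aᶜ).orderEmbOfFin (compl_card A hA) (σ' ⟨(i : ℕ) - c, by omega⟩)

lemma ψfun_bij (σ' : Equiv.Perm (Fin (n - c))) : Function.Bijective (ψfun hcn A hA σ') := by
  rw [Fintype.bijective_iff_injective_and_card]
  refine ⟨fun i j hij => ?_, rfl⟩
  unfold ψfun at hij
  by_cases hi : (i : ℕ) < c <;> by_cases hj : (j : ℕ) < c
  · rw [dif_pos hi, dif_pos hj] at hij
    have := (A.orderEmbOfFin hA).injective hij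
    rw [Fin.mk.injEq] at this
    exact Fin.ext (by omega)
  · rw [dif_pos hi, dif_neg hj] at hij
    have h1 := A.orderEmbOfFin_mem hA ⟨c - 1 - (i : ℕ), by omega⟩
    have h2 := (Aᶜ).orderEmbOfFin_mem (compl_card A hA) (σ' ⟨(j : ℕ) - c, by omega⟩)
    rw [Finset.mem_compl] at h2
    exact absurd (hij ▸ h1) h2
  · rw [dif_neg hi, dif_pos hj] at hij
    have h1 := A.orderEmbOfFin_mem hA ⟨c - 1 - (j : ℕ), by omega⟩
    have h2 := (Aᶜ).orderEmbOfFin_mem (compl_card A hA) (σ' ⟨(i : ℕ) - c, by omega⟩)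
    rw [Finset.mem_compl] at h2
    exact absurd (hij.symm ▸ h1) h2
  · rw [dif_neg hi, dif_neg hj] at hij
    have := σ'.injective (((Aᶜ).orderEmbOfFin (compl_card A hA)).injective hij)
    rw [Fin.mk.injEq] at this
    exact Fin.ext (by omega)

noncomputable def ψperm (σ' : Equiv.Perm (Fin (n - c))) : Equiv.Perm (Fin n) :=
  Equiv.ofBijective _ (ψfun_bij hcn A hA σ')

lemma ψperm_lt (σ' : Equiv.Perm (Fin (n - c))) (i : Fin n) (h : (i : ℕ) < c) :
    ψperm hcn A hA σ' i = A.orderEmbOfFin hA ⟨c - 1 - (i : ℕ), by omega⟩ := by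
  simp only [ψperm, Equiv.ofBijective_apply, ψfun, dif_pos h]

lemma ψperm_ge (σ' : Equiv.Perm (Fin (n - c))) (i : Fin n) (h : ¬ (i : ℕ) < c) :
    ψperm hcn A hA σ' i
      = (Aᶜ).orderEmbOfFin (compl_card A hA) (σ' ⟨(i : ℕ) - c, by omega⟩) := by
  simp only [ψperm, Equiv.ofBijective_apply, ψfun, dif_neg h]



lemma ψperm_ge' (σ' : Equiv.Perm (Fin (n - c))) (i : Fin n) (k : Fin (n - c))
    (h : (k : ℕ) + c = (i : ℕ)) :
    ψperm hcn A hA σ' i = (Aᶜ).orderEmbOfFin (compl_card A hA) (σ' k) := by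
  rw [ψperm_ge hcn A hA σ' i (by omega)]
  congr 1
  congr 1
  exact Fin.ext (by simp; omega)

lemma ψperm_image (σ' : Equiv.Perm (Fin (n - c))) :
    (univ : Finset (Fin c)).image
      (fun j : Fin c => ψperm hcn A hA σ' ⟨(j : ℕ), lt_of_lt_of_le j.isLt hcn⟩) = A := by
  have hinj : Function.Injective
      (fun j : Fin c => ψperm hcn A hA σ' ⟨(j : ℕ), lt_of_lt_of_le j.isLt hcn⟩) := by
    intro j1 j2 h
    have := (ψperm hcn A hA σ').injective h
    rw [Fin.mk.injEq] at this
    exact Fin.ext this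
  apply Finset.eq_of_subset_of_card_le
  · intro x hx
    rw [Finset.mem_image] at hx
    obtain ⟨j, -, rfl⟩ := hx
    rw [ψperm_lt hcn A hA σ' _ (j.isLt)]
    exact A.orderEmbOfFin_mem hA _
  · rw [Finset.card_image_of_injective _ hinj, Finset.card_univ, Fintype.card_fin, hA]


end psi

lemma ψperm_mem {n c : ℕ} (hc1 : 1 ≤ c) (hcn : c ≤ n) (W : Finset ℕ)
    (hW : W ⊆ Finset.range (n - c - 1)) (A : Finset (Fin n)) (hA : A.card = c)
    (σ' : Equiv.Perm (Fin (n - c))) (hσ' : W ⊆ desN σ') :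
    (Finset.range (c-1) ∪ W.image (· + c)) ⊆ desN (ψperm hcn A hA σ') := by
  intro x hx
  rcases Finset.mem_union.mp hx with hx | hx
  · rw [Finset.mem_range] at hx
    have hx1 : x + 1 < n := by omega
    rw [mem_desN]
    refine ⟨hx1, ?_⟩
    rw [ψperm_lt hcn A hA σ' ⟨x+1, hx1⟩ (by simpa using by omega),
        ψperm_lt hcn A hA σ' ⟨x, _⟩ (by simpa using by omega)]
    exact (A.orderEmbOfFin hA).strictMono (by simp; omega)
  · rw [Finset.mem_image] at hx
    obtain ⟨w, hwW, rfl⟩ := hx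
    have hw : w < n - c - 1 := Finset.mem_range.mp (hW hwW)
    have hx1 : (w + c) + 1 < n := by omega
    rw [mem_desN]
    refine ⟨hx1, ?_⟩
    obtain ⟨hw1, hwlt⟩ := mem_desN.mp (hσ' hwW)
    rw [ψperm_ge' hcn A hA σ' ⟨w + c + 1, hx1⟩ ⟨w + 1, hw1⟩ (by simp; omega),
        ψperm_ge' hcn A hA σ' ⟨w + c, by omega⟩ ⟨w, by omega⟩ (by simp)]
    exact ((Aᶜ).orderEmbOfFin (compl_card A hA)).strictMono hwlt

lemma ψperm_surj {n c : ℕ} (hc1 : 1 ≤ c) (hcn : c ≤ n) (W : Finset ℕ)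
    (hW : W ⊆ Finset.range (n - c - 1)) (σ : Equiv.Perm (Fin n))
    (hσ : (Finset.range (c-1) ∪ W.image (· + c)) ⊆ desN σ) :
    ∃ (A : Finset (Fin n)) (hA : A.card = c) (σ' : Equiv.Perm (Fin (n - c))),
      (W ⊆ desN σ') ∧ ψperm hcn A hA σ' = σ := by
  -- the image of the first `c` positions
  have hmkinj : Function.Injective (fun j : Fin c => σ ⟨(j : ℕ), by omega⟩) := by
    intro j1 j2 h
    have := σ.injective h
    rw [Fin.mk.injEq] at this
    exact Fin.ext this
  set A : Finset (Fin n) := (univ : Finset (Fin c)).image (fun j : Fin c => σ ⟨(j : ℕ), by omega⟩)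
    with hAdef
  have hA : A.card = c := by
    rw [hAdef, Finset.card_image_of_injective _ hmkinj, Finset.card_univ, Fintype.card_fin]
  -- strict decrease on the first `c` positions
  have step : ∀ m, m + 1 < c → ∀ (h1 : m + 1 < n) (h2 : m < n), σ ⟨m+1, h1⟩ < σ ⟨m, h2⟩ := by
    intro m hm h1 h2
    have hmem : m ∈ Finset.range (c-1) ∪ W.image (· + c) :=
      Finset.mem_union_left _ (Finset.mem_range.mpr (by omega))
    obtain ⟨h', hlt⟩ := mem_desN.mp (hσ hmem)
    exact hlt
  have dec : ∀ y x, x < y → y < c → ∀ (h1 : y < n) (h2 : x < n), σ ⟨y, h1⟩ < σ ⟨x, h2⟩ := by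
    intro y
    induction y with
    | zero => omega
    | succ m ih =>
      intro x hx hyc h1 h2
      rcases Nat.lt_or_ge x m with hxm | hxm
      · exact lt_trans (step m hyc h1 (by omega)) (ih x hxm (by omega) (by omega) h2)
      · have hxeq : x = m := by omega
        subst hxeq
        exact step x hyc h1 h2
  -- the increasing enumeration of A
  have hg : (fun j : Fin c => σ ⟨c - 1 - (j : ℕ), by omega⟩) = A.orderEmbOfFin hA := by
    apply Finset.orderEmbOfFin_unique hA
    · intro j
      exact Finset.mem_image_of_mem _ (Finset.mem_univ (⟨c - 1 - (j : ℕ), by omega⟩ : Fin c))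
    · intro j1 j2 hj
      exact dec (c - 1 - (j1 : ℕ)) (c - 1 - (j2 : ℕ)) (by omega) (by omega) _ _
  -- positions ≥ c land in the complement
  have memB : ∀ k : Fin (n - c), σ ⟨(k : ℕ) + c, by omega⟩ ∈ (Aᶜ : Finset (Fin n)) := by
    intro k
    rw [Finset.mem_compl]
    intro hmem
    obtain ⟨j, -, hj⟩ := Finset.mem_image.mp hmem
    have := σ.injective hj
    rw [Fin.mk.injEq] at this
    omega
  set eB := (Aᶜ : Finset (Fin n)).orderIsoOfFin (compl_card A hA) with heB
  have hσ'inj : Function.Injective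
      (fun k : Fin (n - c) => eB.symm ⟨σ ⟨(k : ℕ) + c, by omega⟩, memB k⟩) := by
    intro k1 k2 h
    have h2 := congrArg eB h
    simp only [OrderIso.apply_symm_apply, Subtype.mk.injEq] at h2
    have := σ.injective h2
    rw [Fin.mk.injEq] at this
    exact Fin.ext (by omega)
  set σ' : Equiv.Perm (Fin (n - c)) :=
    Equiv.ofBijective _ (Finite.injective_iff_bijective.mp hσ'inj) with hσ'def
  have hσ'app : ∀ k : Fin (n - c), σ' k = eB.symm ⟨σ ⟨(k : ℕ) + c, by omega⟩, memB k⟩ := by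
    intro k; rw [hσ'def]; rfl
  refine ⟨A, hA, σ', ?_, ?_⟩
  · -- W ⊆ desN σ'
    intro w hw
    have hwr : w < n - c - 1 := Finset.mem_range.mp (hW hw)
    have h1 : w + 1 < n - c := by omega
    rw [mem_desN]
    refine ⟨h1, ?_⟩
    rw [hσ'app ⟨w+1, h1⟩, hσ'app ⟨w, by omega⟩]
    rw [eB.symm.lt_iff_lt, Subtype.mk_lt_mk]
    have hmem : w + c ∈ Finset.range (c-1) ∪ W.image (· + c) :=
      Finset.mem_union_right _ (Finset.mem_image_of_mem _ hw)
    obtain ⟨h', hlt⟩ := mem_desN.mp (hσ hmem)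
    convert hlt using 2 <;> first | rfl | (apply Fin.ext; simp; try omega)
  · apply Equiv.ext
    intro i
    by_cases hi : (i : ℕ) < c
    · rw [ψperm_lt hcn A hA σ' i hi, ← hg]
      exact congrArg σ (Fin.ext (by simp; omega))
    · rw [ψperm_ge' hcn A hA σ' i ⟨(i : ℕ) - c, by omega⟩ (by simp; omega), hσ'app,
        ← Finset.coe_orderIsoOfFin_apply, ← heB, OrderIso.apply_symm_apply]
      exact congrArg σ (Fin.ext (by simp; omega))

lemma keyB {n c : ℕ} (hc1 : 1 ≤ c) (hcn : c ≤ n) (W : Finset ℕ)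
    (hW : W ⊆ Finset.range (n - c - 1)) :
    Dcnt n (Finset.range (c-1) ∪ W.image (· + c)) = n.choose c * Dcnt (n-c) W := by
  have hcard :
      ((((univ : Finset (Fin n)).powersetCard c) ×ˢ
          (univ.filter fun σ' : Equiv.Perm (Fin (n-c)) => W ⊆ desN σ')).card : ℕ)
      = (univ.filter fun σ : Equiv.Perm (Fin n) =>
          (Finset.range (c-1) ∪ W.image (· + c)) ⊆ desN σ).card := by
    refine Finset.card_bij
      (fun p hp => ψperm hcn p.1
        ((Finset.mem_powersetCard.mp (Finset.mem_product.mp hp).1).2) p.2) ?_ ?_ ?_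
    · intro p hp
      rw [Finset.mem_filter]
      exact ⟨Finset.mem_univ _,
        ψperm_mem hc1 hcn W hW p.1 _ p.2
          ((Finset.mem_filter.mp (Finset.mem_product.mp hp).2).2)⟩
    · rintro ⟨A1, σ1⟩ hp1 ⟨A2, σ2⟩ hp2 heq
      simp only at heq
      have hA1 : A1.card = c := (Finset.mem_powersetCard.mp (Finset.mem_product.mp hp1).1).2
      have hA2 : A2.card = c := (Finset.mem_powersetCard.mp (Finset.mem_product.mp hp2).1).2
      have hAeq : A1 = A2 := by
        rw [← ψperm_image hcn A1 hA1 σ1, ← ψperm_image hcn A2 hA2 σ2, heq]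
      subst hAeq
      simp only [Prod.mk.injEq, true_and]
      apply Equiv.ext
      intro k
      have hk : (k : ℕ) + c < n := by have := k.isLt; omega
      have e1 := ψperm_ge' hcn A1 hA1 σ1 ⟨(k : ℕ) + c, hk⟩ k rfl
      have e2 := ψperm_ge' hcn A1 hA2 σ2 ⟨(k : ℕ) + c, hk⟩ k rfl
      have happ : ψperm hcn A1 hA1 σ1 ⟨(k : ℕ) + c, hk⟩
          = ψperm hcn A1 hA2 σ2 ⟨(k : ℕ) + c, hk⟩ := by rw [heq]
      exact ((A1ᶜ).orderEmbOfFin (compl_card A1 hA1)).injective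
        (e1.symm.trans (happ.trans e2))
    · intro b hb
      have hmem := (Finset.mem_filter.mp hb).2
      obtain ⟨A, hA, σ', hσ'W, heq⟩ := ψperm_surj hc1 hcn W hW b hmem
      refine ⟨(A, σ'), ?_, heq⟩
      exact Finset.mem_product.mpr
        ⟨Finset.mem_powersetCard.mpr ⟨Finset.subset_univ _, hA⟩,
         Finset.mem_filter.mpr ⟨Finset.mem_univ _, hσ'W⟩⟩
  rw [Dcnt, ← hcard, Finset.card_product, Finset.card_powersetCard, Finset.card_univ,
    Fintype.card_fin, Dcnt]

noncomputable def cOf (U : Finset ℕ) : ℕ :=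
  Nat.find (Infinite.exists_notMem_finset U) + 1

lemma cOf_not_mem (U : Finset ℕ) : cOf U - 1 ∉ U := by
  have := Nat.find_spec (Infinite.exists_notMem_finset U)
  simpa [cOf] using this

lemma cOf_mem (U : Finset ℕ) {m : ℕ} (hm : m < cOf U - 1) : m ∈ U := by
  by_contra h
  have h2 : Nat.find (Infinite.exists_notMem_finset U) ≤ m := Nat.find_le h
  simp only [cOf] at hm
  omega

lemma cOf_le {U : Finset ℕ} {N : ℕ} (hU : U ⊆ Finset.range N) : cOf U ≤ N + 1 := by
  have h : N ∉ U := fun h => by simpa using hU h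
  have h2 : Nat.find (Infinite.exists_notMem_finset U) ≤ N := Nat.find_le h
  simp only [cOf]
  omega

lemma cOf_pos (U : Finset ℕ) : 1 ≤ cOf U := by simp [cOf]

lemma left_inv_aux (U : Finset ℕ) :
    Finset.range (cOf U - 1) ∪ ((U.filter (fun x => cOf U ≤ x)).image (· - cOf U)).image
      (· + cOf U) = U := by
  set k := cOf U with hk
  ext x
  rw [Finset.image_image]
  simp only [Finset.mem_union, Finset.mem_range, Finset.mem_image, Finset.mem_filter,
    Function.comp_apply]
  constructor
  · rintro (hx | ⟨y, ⟨hyU, hy2⟩, rfl⟩)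
    · exact cOf_mem U hx
    · have : y - k + k = y := by omega
      rw [this]; exact hyU
  · intro hxU
    rcases Nat.lt_or_ge x (k - 1) with hx | hx
    · exact Or.inl hx
    · have hk1 : 1 ≤ k := cOf_pos U
      have hne : x ≠ k - 1 := fun h => absurd (h ▸ hxU) (cOf_not_mem U)
      exact Or.inr ⟨x, ⟨hxU, by omega⟩, by omega⟩

lemma partition (n : ℕ) (hn : 1 ≤ n) (f : Finset ℕ → ℤ) :
    ∑ U ∈ (Finset.range (n-1)).powerset, f U
    = ∑ p ∈ (Finset.Icc 1 n).sigma (fun c => (Finset.range (n-c-1)).powerset),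
        f (Finset.range (p.1 - 1) ∪ p.2.image (· + p.1)) := by
  refine Finset.sum_nbij'
    (fun U => ⟨cOf U, (U.filter (fun x => cOf U ≤ x)).image (· - cOf U)⟩)
    (fun p => Finset.range (p.1 - 1) ∪ p.2.image (· + p.1)) ?_ ?_ ?_ ?_ ?_
  · -- maps into sigma
    intro U hU
    rw [Finset.mem_powerset] at hU
    simp only [Finset.mem_sigma]
    constructor
    · rw [Finset.mem_Icc]
      have h1 := cOf_le hU
      exact ⟨cOf_pos U, by omega⟩
    · rw [Finset.mem_powerset]
      intro w hw
      rw [Finset.mem_image] at hw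
      obtain ⟨u, hu, rfl⟩ := hw
      rw [Finset.mem_filter] at hu
      have h1 : u < n - 1 := Finset.mem_range.mp (hU hu.1)
      have h2 : cOf U ≤ u := hu.2
      rw [Finset.mem_range]
      omega
  · -- maps back
    rintro ⟨c, W⟩ hp
    simp only [Finset.mem_sigma, Finset.mem_Icc, Finset.mem_powerset] at hp
    dsimp only
    obtain ⟨⟨hc1, hcn⟩, hW⟩ := hp
    rw [Finset.mem_powerset]
    intro x hx
    rcases Finset.mem_union.mp hx with hx | hx
    · rw [Finset.mem_range] at hx ⊢; omega
    · obtain ⟨w, hw, rfl⟩ := Finset.mem_image.mp hx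
      have := Finset.mem_range.mp (hW hw)
      rw [Finset.mem_range]
      omega
  · -- left inverse
    intro U hU
    exact left_inv_aux U
  · -- right inverse
    rintro ⟨c, W⟩ hp
    simp only [Finset.mem_sigma, Finset.mem_Icc, Finset.mem_powerset] at hp
    obtain ⟨⟨hc1, hcn⟩, hW⟩ := hp
    have hfind : cOf (Finset.range (c - 1) ∪ W.image (· + c)) = c := by
      have h1 : Nat.find (Infinite.exists_notMem_finset
          (Finset.range (c - 1) ∪ W.image (· + c))) = c - 1 := by
        rw [Nat.find_eq_iff]
        constructor
        · intro h
          rcases Finset.mem_union.mp h with h | h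
          · exact absurd (Finset.mem_range.mp h) (by omega)
          · obtain ⟨w, -, hw⟩ := Finset.mem_image.mp h
            omega
        · intro m hm
          simp only [not_not]
          exact Finset.mem_union_left _ (Finset.mem_range.mpr hm)
      simp only [cOf, h1]
      omega
    simp only
    rw [hfind]
    congr 1
    have hfilter : (Finset.range (c - 1) ∪ W.image (· + c)).filter (fun x => c ≤ x)
        = W.image (· + c) := by
      ext x
      simp only [Finset.mem_filter, Finset.mem_union, Finset.mem_range, Finset.mem_image]
      constructor
      · rintro ⟨hx | ⟨w, hw, rfl⟩, hc⟩
        · omega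
        · exact ⟨w, hw, rfl⟩
      · rintro ⟨w, hw, rfl⟩
        exact ⟨Or.inr ⟨w, hw, rfl⟩, by omega⟩
    rw [hfilter, Finset.image_image]
    ext x
    simp only [Finset.mem_image, Function.comp_apply]
    constructor
    · rintro ⟨w, hw, rfl⟩
      have : w + c - c = w := by omega
      rw [this]; exact hw
    · intro hx
      exact ⟨x, hx, by omega⟩
  · intro U hU
    exact (congrArg f (left_inv_aux U)).symm

lemma recurrence (n : ℕ) (hn : 1 ≤ n) :
    (bcnt n : ℤ) = ∑ c ∈ Finset.Icc 1 n,
      (-1:ℤ)^(c-1) * ((n.choose c : ℤ))^2 * (bcnt (n-c) : ℤ) := by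
  rw [lemmaA, partition n hn, Finset.sum_sigma]
  apply Finset.sum_congr rfl
  intro c hc
  rw [Finset.mem_Icc] at hc
  obtain ⟨hc1, hcn⟩ := hc
  rw [lemmaA (n-c), Finset.mul_sum]
  apply Finset.sum_congr rfl
  intro W hW
  rw [Finset.mem_powerset] at hW
  have hdisj : Disjoint (Finset.range (c-1)) (W.image (· + c)) := by
    rw [Finset.disjoint_left]
    intro a ha hb
    obtain ⟨w, -, rfl⟩ := Finset.mem_image.mp hb
    have := Finset.mem_range.mp ha
    omega
  have hcard : (Finset.range (c-1) ∪ W.image (· + c)).card = (c-1) + W.card := by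
    rw [Finset.card_union_of_disjoint hdisj, Finset.card_range,
      Finset.card_image_of_injective _ (add_left_injective c)]
  rw [hcard, keyB hc1 hcn W hW, pow_add]
  push_cast
  ring

lemma bcnt_zero : bcnt 0 = 1 := by
  rw [bcnt]
  rw [Finset.filter_true_of_mem]
  · simp [Finset.card_univ, Fintype.card_perm]
  · intro p _
    apply Finset.eq_empty_of_forall_notMem
    intro x
    exact x.elim0

lemma hrecQ (n : ℕ) (hn : 1 ≤ n) :
    (bcnt n : ℚ) = ∑ i ∈ Finset.range n,
      (-1:ℚ)^i * ((n.choose (i+1) : ℚ))^2 * (bcnt (n-(i+1)) : ℚ) := by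
  have h := recurrence n hn
  have h2 : ((bcnt n : ℤ) : ℚ) = ∑ c ∈ Finset.Icc 1 n,
      (-1:ℚ)^(c-1) * ((n.choose c : ℚ))^2 * (bcnt (n-c) : ℚ) := by
    rw [h]; push_cast; rfl
  rw [← Int.cast_natCast, h2, ← Finset.Ico_add_one_right_eq_Icc, Finset.sum_Ico_eq_sum_range]
  simp only [Nat.add_sub_cancel]
  apply Finset.sum_congr rfl
  intro i _
  have e : 1 + i = i + 1 := by omega
  rw [e]
  simp only [Nat.add_sub_cancel]

/-- Write `1/J₀(2√t) = Σ_{n≥0} bₙ tⁿ/(n!)²` where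
`J₀(2√t) = Σ_{m≥0} (-1)^m t^m/(m!)²` as a formal power series over `ℚ`.
Then `bₙ = #{(σ,τ) ∈ Sₙ² : Des σ ∩ Des τ = ∅}`. -/
theorem stmt12 (n : ℕ) :
    (PowerSeries.coeff (R := ℚ) n)
      (PowerSeries.mk (fun m : ℕ => ((-1 : ℚ) ^ m / ((m.factorial : ℚ)) ^ 2)))⁻¹
    = ((Finset.univ.filter
        (fun p : Equiv.Perm (Fin n) × Equiv.Perm (Fin n) =>
          permDes p.1 ∩ permDes p.2 = ∅)).card : ℚ) / ((n.factorial : ℚ)) ^ 2 := by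
  have hfac : ∀ m : ℕ, ((m.factorial : ℚ)) ≠ 0 :=
    fun m => Nat.cast_ne_zero.mpr m.factorial_ne_zero
  set J : PowerSeries ℚ :=
    PowerSeries.mk (fun m : ℕ => ((-1 : ℚ) ^ m / ((m.factorial : ℚ)) ^ 2)) with hJ
  set B : PowerSeries ℚ :=
    PowerSeries.mk (fun m : ℕ => ((bcnt m : ℚ) / ((m.factorial : ℚ)) ^ 2)) with hB
  have hJ0 : PowerSeries.constantCoeff J ≠ 0 := by
    rw [hJ, PowerSeries.constantCoeff_mk]
    norm_num
  have hmulJB : J * B = 1 := by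
    apply PowerSeries.ext
    intro m
    rw [PowerSeries.coeff_mul, PowerSeries.coeff_one,
      Finset.Nat.sum_antidiagonal_eq_sum_range_succ_mk]
    rcases Nat.eq_zero_or_pos m with hm | hm
    · subst hm
      simp [hJ, hB, bcnt_zero]
    · rw [if_neg (by omega), Finset.sum_range_succ']
      simp only [hJ, hB, PowerSeries.coeff_mk, Nat.sub_zero, pow_zero, Nat.factorial_zero,
        Nat.cast_one, one_pow, div_one, one_mul]
      rw [hrecQ m hm, Finset.sum_div, ← Finset.sum_add_distrib]
      apply Finset.sum_eq_zero
      intro i hi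
      rw [Finset.mem_range] at hi
      have hk : i + 1 ≤ m := by omega
      rw [Nat.cast_choose ℚ hk]
      have h1 := hfac (i+1)
      have h2 := hfac (m - (i+1))
      have h3 := hfac m
      field_simp
      ring
  have hmul : B * J = 1 := by rw [mul_comm]; exact hmulJB
  have hinv : B = J⁻¹ := (PowerSeries.eq_inv_iff_mul_eq_one hJ0).mpr hmul
  rw [← hinv, hB, PowerSeries.coeff_mk]
  rfl
end

section
/- Parallelogram polyomino encoding: a biword w = [(i₁,j₁),...,(i_n,j_n)] over pairs with 1 ≤ i_k ≤ j_k encodes a parallelogram polyomino if and only if i_k ≤ j_{k+1} for all 1 ≤ k < n and i_n = 1. Each element of the heap monoid (the free monoid on segments a_{ij}, i ≤ j, modulo the commutations a_{ij}a_{kl} = a_{kl}a_{ij} for j < k) has a unique representative word a_{i₁j₁}···a_{i_nj_n} satisfying i_k ≤ j_{k+1} for all k < n. -/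
/-- A segment: an interval `[i,j]` of positive integers, `1 ≤ i ≤ j`. -/
def Seg : Type := {p : ℕ × ℕ // 1 ≤ p.1 ∧ p.1 ≤ p.2}

/-- The commutation relation of the heap monoid:
`a_{ij} a_{kl} ≡ a_{kl} a_{ij}` whenever `j < k` (non-overlapping segments). -/
def heapRel : FreeMonoid Seg → FreeMonoid Seg → Prop := fun x y =>
  ∃ a b : Seg, a.val.2 < b.val.1 ∧
    x = FreeMonoid.of a * FreeMonoid.of b ∧ y = FreeMonoid.of b * FreeMonoid.of a

/-- The heap monoid of segments: the free monoid on segments modulo the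
partial commutations. -/
def heapCon : Con (FreeMonoid Seg) := conGen heapRel

namespace HeapNF

/-- Insert a segment into a word, letting it move right past disjoint smaller segments. -/
def ins (a : Seg) : List Seg → List Seg
  | [] => [a]
  | b :: l => if b.val.2 < a.val.1 then b :: ins a l else a :: b :: l

/-- Normal form. -/
def nf (w : List Seg) : List Seg := w.foldr ins []

lemma ins_head? (a : Seg) : ∀ l : List Seg,
    (ins a l).head? = some a ∨ (ins a l).head? = l.head? := by
  intro l
  cases l with
  | nil => left; rfl
  | cons b l =>
    by_cases h : b.val.2 < a.val.1
    · right; simp [ins, h]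
    · left; simp [ins, h]

lemma ins_comm {a b : Seg} (h : a.val.2 < b.val.1) :
    ∀ m : List Seg, ins a (ins b m) = ins b (ins a m) := by
  have hba : ¬ b.val.2 < a.val.1 := by
    have := a.prop.2; have := b.prop.2; omega
  intro m
  induction m with
  | nil => simp [ins, hba, h]
  | cons c rest ih =>
    by_cases h1 : c.val.2 < a.val.1
    · have h2 : c.val.2 < b.val.1 := lt_trans (lt_of_lt_of_le h1 a.prop.2) h
      simp [ins, h1, h2, ih]
    · by_cases h2 : c.val.2 < b.val.1
      · simp [ins, h1, h2, hba, h]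
      · simp [ins, h1, h2, hba, h]

lemma ins_chain {a : Seg} : ∀ {l : List Seg},
    l.Chain' (fun a b => a.val.1 ≤ b.val.2) →
    (ins a l).Chain' (fun a b => a.val.1 ≤ b.val.2) := by
  intro l
  induction l with
  | nil => intro _; simp [ins, List.Chain']
  | cons b l ih =>
    intro hc
    rw [List.Chain', List.isChain_cons] at hc
    by_cases h : b.val.2 < a.val.1
    · show List.Chain' _ (if b.val.2 < a.val.1 then b :: ins a l else a :: b :: l)
      rw [if_pos h, List.Chain', List.isChain_cons]
      refine ⟨?_, ih hc.2⟩
      intro y hy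
      rcases ins_head? a l with h' | h'
      · rw [h'] at hy; cases hy
        exact le_trans b.prop.2 (le_trans (le_of_lt h) a.prop.2)
      · rw [h'] at hy; exact hc.1 y hy
    · show List.Chain' _ (if b.val.2 < a.val.1 then b :: ins a l else a :: b :: l)
      rw [if_neg h, List.Chain', List.isChain_cons]
      refine ⟨?_, List.isChain_cons.mpr hc⟩
      intro y hy
      simp at hy; subst hy; omega

lemma nf_chain (w : List Seg) : (nf w).Chain' (fun a b => a.val.1 ≤ b.val.2) := by
  induction w with
  | nil => simp [nf, List.Chain']
  | cons a l ih => exact ins_chain ih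

lemma nf_fix : ∀ {w : List Seg},
    w.Chain' (fun a b => a.val.1 ≤ b.val.2) → nf w = w := by
  intro w
  induction w with
  | nil => intro _; rfl
  | cons a l ih =>
    intro hc
    rw [List.Chain', List.isChain_cons] at hc
    have : nf (a :: l) = ins a (nf l) := rfl
    rw [this, ih hc.2]
    cases l with
    | nil => rfl
    | cons b l' =>
      have hab : a.val.1 ≤ b.val.2 := hc.1 b rfl
      show (if b.val.2 < a.val.1 then b :: ins a l' else a :: b :: l') = _
      rw [if_neg (by omega)]

/-- The kernel congruence of the normal-form map. -/
def nfCon : Con (FreeMonoid Seg) where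
  r x y := ∀ m : List Seg, (FreeMonoid.toList x).foldr ins m = (FreeMonoid.toList y).foldr ins m
  iseqv := ⟨fun _ _ => rfl, fun h m => (h m).symm, fun h1 h2 m => (h1 m).trans (h2 m)⟩
  mul' := by
    intro w x y z h1 h2 m
    show (FreeMonoid.toList (w * y)).foldr ins m = (FreeMonoid.toList (x * z)).foldr ins m
    rw [FreeMonoid.toList_mul, FreeMonoid.toList_mul, List.foldr_append, List.foldr_append,
      h2 m, h1]

lemma heapCon_le_nfCon : heapCon ≤ nfCon := by
  apply Con.conGen_le.mpr
  rintro x y ⟨a, b, hab, rfl, rfl⟩ m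
  exact ins_comm hab m

lemma nf_invariant {u v : FreeMonoid Seg} (h : heapCon u v) :
    nf (FreeMonoid.toList u) = nf (FreeMonoid.toList v) :=
  heapCon_le_nfCon h []

lemma heapCon_ins (a : Seg) : ∀ m : List Seg,
    heapCon (FreeMonoid.ofList (a :: m)) (FreeMonoid.ofList (ins a m)) := by
  intro m
  induction m with
  | nil => exact heapCon.refl _
  | cons b l ih =>
    by_cases h : b.val.2 < a.val.1
    · show heapCon _ (FreeMonoid.ofList (if b.val.2 < a.val.1 then b :: ins a l else a :: b :: l))
      rw [if_pos h]
      have step : heapCon (FreeMonoid.ofList (a :: b :: l)) (FreeMonoid.ofList (b :: a :: l)) := by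
        have h1 : heapCon (FreeMonoid.of b * FreeMonoid.of a) (FreeMonoid.of a * FreeMonoid.of b) :=
          ConGen.Rel.of _ _ ⟨b, a, h, rfl, rfl⟩
        have h2 := heapCon.mul h1.symm (heapCon.refl (FreeMonoid.ofList l))
        convert h2 using 1 <;> rfl
      refine step.trans ?_
      have : heapCon (FreeMonoid.ofList (a :: l)) (FreeMonoid.ofList (ins a l)) := ih
      have h2 := heapCon.mul (heapCon.refl (FreeMonoid.of b)) this
      convert h2 using 1 <;> rfl
    · show heapCon _ (FreeMonoid.ofList (if b.val.2 < a.val.1 then b :: ins a l else a :: b :: l))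
      rw [if_neg h]
      exact heapCon.refl _

lemma heapCon_nf (w : List Seg) :
    heapCon (FreeMonoid.ofList w) (FreeMonoid.ofList (nf w)) := by
  induction w with
  | nil => exact heapCon.refl _
  | cons a l ih =>
    have h1 : heapCon (FreeMonoid.ofList (a :: l)) (FreeMonoid.ofList (a :: nf l)) := by
      have := heapCon.mul (heapCon.refl (FreeMonoid.of a)) ih
      convert this using 1 <;> rfl
    exact h1.trans (heapCon_ins a (nf l))

end HeapNF

/-- Every element of the heap monoid on segments has a unique representative
word `a_{i₁j₁} ⋯ a_{iₙjₙ}` satisfying `i_k ≤ j_{k+1}` for all `1 ≤ k < n`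
(the words encoding parallelogram-polyomino-type columns). -/
theorem stmt15 (x : heapCon.Quotient) :
    ∃! w : List Seg,
      Con.mk' heapCon (FreeMonoid.ofList w) = x ∧
      w.Chain' (fun a b => a.val.1 ≤ b.val.2) := by
  obtain ⟨u, rfl⟩ := Con.mk'_surjective x
  refine ⟨HeapNF.nf (FreeMonoid.toList u), ⟨?_, HeapNF.nf_chain _⟩, ?_⟩
  · exact (Con.eq heapCon).mpr ((HeapNF.heapCon_nf (FreeMonoid.toList u)).symm)
  · rintro w ⟨hw, hchain⟩
    replace hw : heapCon (FreeMonoid.ofList w) u := (Con.eq heapCon).mp hw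
    have := HeapNF.nf_invariant hw
    have h2 : FreeMonoid.toList (FreeMonoid.ofList w) = w := rfl
    rw [h2] at this
    rw [HeapNF.nf_fix hchain] at this
    exact this
end
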